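/- arXiv:2605.26859 — 9 statements merged into one kernel-verified Lean document; each statement's English description precedes it below -/
import Mathlib

section
/- For every bigraph B, the following are equivalent: B is an 𝓘⁺⁺-bigraph; B is an 𝓘⁻⁻-bigraph; B is an 𝓘⁺⁻-bigraph; B is an 𝓘⁻⁺-bigraph; B is an 𝓘^±-bigraph; B is an 𝓘-bigraph. In other words, the class of interval bigraphs does not depend on which types of bounded real intervals (closed, open, closed-open, open-closed, or any mixture) are allowed in the intersection representation. -/
open scoped Classical


/-- `𝓘⁺⁺`: the family of bounded closed intervals `[a, b]` with `a < b`. -/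
def IccFam : Set (Set ℝ) := {s | ∃ a b : ℝ, a < b ∧ s = Set.Icc a b}

/-- `𝓘⁻⁻`: the family of bounded open intervals `(a, b)` with `a < b`. -/
def IooFam : Set (Set ℝ) := {s | ∃ a b : ℝ, a < b ∧ s = Set.Ioo a b}

/-- `𝓘⁺⁻`: the family of bounded closed-open intervals `[a, b)` with `a < b`. -/
def IcoFam : Set (Set ℝ) := {s | ∃ a b : ℝ, a < b ∧ s = Set.Ico a b}

/-- `𝓘⁻⁺`: the family of bounded open-closed intervals `(a, b]` with `a < b`. -/
def IocFam : Set (Set ℝ) := {s | ∃ a b : ℝ, a < b ∧ s = Set.Ioc a b}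

/-- A bigraph `B = (X, Y, E)` is an `M`-bigraph if it admits an `M`-intersection
representation: a function `f` on the vertices, with values in `M`, such that for
`x ∈ X` and `y ∈ Y`, `xy ∈ E` iff `f x ∩ f y ≠ ∅`. -/
def IsMBigraph (M : Set (Set ℝ)) {X Y : Type} (E : X → Y → Prop) : Prop :=
  ∃ f : X ⊕ Y → Set ℝ, (∀ v, f v ∈ M) ∧
    ∀ x y, E x y ↔ (f (Sum.inl x) ∩ f (Sum.inr y)).Nonempty

lemma isMBigraph_mono {X Y : Type} {M M' : Set (Set ℝ)} (h : M ⊆ M') {E : X → Y → Prop}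
    (hE : IsMBigraph M E) : IsMBigraph M' E := by
  obtain ⟨f, hf, he⟩ := hE
  exact ⟨f, fun v => h (hf v), he⟩

lemma exists_eps (S : Finset ℝ) :
    ∃ ε : ℝ, 0 < ε ∧ ∀ p ∈ S, ∀ q ∈ S, p < q → 4*ε ≤ q - p := by
  classical
  set T := ((S ×ˢ S).filter (fun pq => pq.1 < pq.2)).image (fun pq => (pq.2 - pq.1)/4) with hT
  by_cases h : T.Nonempty
  · refine ⟨T.min' h, ?_, ?_⟩
    · have hm := T.min'_mem h
      simp only [hT, Finset.mem_image, Finset.mem_filter, Finset.mem_product] at hm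
      obtain ⟨pq, ⟨_, hlt⟩, heq⟩ := hm
      rw [← heq]; linarith
    · intro p hp q hq hpq
      have hmem : (q - p)/4 ∈ T := by
        simp only [hT, Finset.mem_image, Finset.mem_filter, Finset.mem_product]
        exact ⟨(p, q), ⟨⟨hp, hq⟩, hpq⟩, rfl⟩
      have := T.min'_le _ hmem
      linarith
  · refine ⟨1, one_pos, fun p hp q hq hpq => absurd ?_ h⟩
    refine ⟨(q - p)/4, ?_⟩
    simp only [hT, Finset.mem_image, Finset.mem_filter, Finset.mem_product]
    exact ⟨(p, q), ⟨⟨hp, hq⟩, hpq⟩, rfl⟩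

lemma mem_mixed {s : Set ℝ} (h : s ∈ IccFam ∪ IooFam ∪ IcoFam ∪ IocFam) :
    ∃ a b : ℝ, a < b ∧ s ⊆ Set.Icc a b ∧
      ∀ ε : ℝ, 0 < ε → 2*ε < b - a →
        Set.Icc (if a ∈ s then a else a + ε) (if b ∈ s then b else b - ε) ⊆ s := by
  rcases h with ((h | h) | h) | h <;> obtain ⟨a, b, hab, rfl⟩ := h
  · refine ⟨a, b, hab, subset_rfl, fun ε hε h2 => ?_⟩
    rw [if_pos (Set.left_mem_Icc.2 hab.le), if_pos (Set.right_mem_Icc.2 hab.le)]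
  · refine ⟨a, b, hab, Set.Ioo_subset_Icc_self, fun ε hε h2 => ?_⟩
    rw [if_neg (by simp), if_neg (by simp)]
    intro t ht
    exact ⟨by linarith [ht.1], by linarith [ht.2]⟩
  · refine ⟨a, b, hab, Set.Ico_subset_Icc_self, fun ε hε h2 => ?_⟩
    rw [if_pos (Set.left_mem_Ico.2 hab), if_neg (by simp)]
    intro t ht
    exact ⟨ht.1, by linarith [ht.2]⟩
  · refine ⟨a, b, hab, Set.Ioc_subset_Icc_self, fun ε hε h2 => ?_⟩
    rw [if_neg (by simp), if_pos (Set.right_mem_Ioc.2 hab)]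
    intro t ht
    exact ⟨by linarith [ht.1], ht.2⟩

lemma mixed_to_closed {X Y : Type} [Fintype X] [Fintype Y] {E : X → Y → Prop}
    (h : IsMBigraph (IccFam ∪ IooFam ∪ IcoFam ∪ IocFam) E) : IsMBigraph IccFam E := by
  classical
  obtain ⟨f, hf, he⟩ := h
  choose a b hab hsub hkey using fun v => mem_mixed (hf v)
  set S : Finset ℝ := (Finset.univ.image a) ∪ (Finset.univ.image b) with hS
  obtain ⟨ε, hε, hgap⟩ := exists_eps S
  have haS : ∀ v, a v ∈ S := fun v =>
    Finset.mem_union_left _ (Finset.mem_image_of_mem a (Finset.mem_univ v))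
  have hbS : ∀ v, b v ∈ S := fun v =>
    Finset.mem_union_right _ (Finset.mem_image_of_mem b (Finset.mem_univ v))
  set a' : X ⊕ Y → ℝ := fun v => if a v ∈ f v then a v else a v + ε with ha'
  set b' : X ⊕ Y → ℝ := fun v => if b v ∈ f v then b v else b v - ε with hb'
  have h2eps : ∀ v, 2*ε < b v - a v := fun v => by
    have := hgap (a v) (haS v) (b v) (hbS v) (hab v); linarith
  have hsub' : ∀ v, Set.Icc (a' v) (b' v) ⊆ f v := fun v => hkey v ε hε (h2eps v)
  have ha'b' : ∀ v, a' v < b' v := fun v => by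
    have := h2eps v
    simp only [ha', hb']
    split <;> split <;> linarith [hab v]
  have ha'le : ∀ v, a' v ≤ a v + ε := fun v => by
    simp only [ha']; split <;> linarith
  have hb'ge : ∀ v, b v - ε ≤ b' v := fun v => by
    simp only [hb']; split <;> linarith
  refine ⟨fun v => Set.Icc (a' v) (b' v), fun v => ⟨a' v, b' v, ha'b' v, rfl⟩, fun x y => ?_⟩
  rw [he x y]
  constructor
  · rintro ⟨t, htu, htw⟩
    set u := Sum.inl x (α := X) (β := Y)
    set w := Sum.inr y (α := X) (β := Y)
    have htIu := hsub u htu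
    have htIw := hsub w htw
    set A := max (a u) (a w) with hA
    set B := min (b u) (b w) with hB
    have hAt : A ≤ t := max_le htIu.1 htIw.1
    have htB : t ≤ B := le_min htIu.2 htIw.2
    have hAS : A ∈ S := by
      rcases max_choice (a u) (a w) with hh | hh <;> rw [hA, hh]
      · exact haS u
      · exact haS w
    have hBS : B ∈ S := by
      rcases min_choice (b u) (b w) with hh | hh <;> rw [hB, hh]
      · exact hbS u
      · exact hbS w
    rcases lt_or_eq_of_le (hAt.trans htB) with hAB | hAB
    · have hg := hgap A hAS B hBS hAB
      refine ⟨A + 2*ε, ⟨?_, ?_⟩, ⟨?_, ?_⟩⟩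
      · have := ha'le u; have : a u ≤ A := le_max_left _ _; linarith [ha'le u]
      · have := hb'ge u; have : B ≤ b u := min_le_left _ _; linarith [hb'ge u]
      · have : a w ≤ A := le_max_right _ _; linarith [ha'le w]
      · have : B ≤ b w := min_le_right _ _; linarith [hb'ge w]
    · have ht : t = A := le_antisymm (hAB ▸ htB) hAt
      have hleft : ∀ v, t ∈ f v → a' v ≤ t := by
        intro v htv
        by_cases hm : a v ∈ f v
        · simp only [ha', if_pos hm]; exact (hsub v htv).1
        · simp only [ha', if_neg hm]
          have h1 : a v ≤ t := (hsub v htv).1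
          have h2 : a v ≠ t := fun hh => hm (hh ▸ htv)
          have htS : t ∈ S := ht ▸ hAS
          have := hgap (a v) (haS v) t htS (lt_of_le_of_ne h1 h2)
          linarith
      have hright : ∀ v, t ∈ f v → t ≤ b' v := by
        intro v htv
        by_cases hm : b v ∈ f v
        · simp only [hb', if_pos hm]; exact (hsub v htv).2
        · simp only [hb', if_neg hm]
          have h1 : t ≤ b v := (hsub v htv).2
          have h2 : t ≠ b v := fun hh => hm (hh ▸ htv)
          have htS : t ∈ S := ht ▸ hAS
          have := hgap t htS (b v) (hbS v) (lt_of_le_of_ne h1 h2)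
          linarith
      exact ⟨t, ⟨hleft u htu, hright u htu⟩, ⟨hleft w htw, hright w htw⟩⟩
  · rintro ⟨s, hsu, hsw⟩
    exact ⟨s, hsub' _ hsu, hsub' _ hsw⟩

lemma closed_to_gen {X Y : Type} [Fintype X] [Fintype Y] {E : X → Y → Prop}
    (F : Set (Set ℝ)) (mk : ℝ → ℝ → ℝ → Set ℝ)
    (h1 : ∀ ε a b : ℝ, 0 < ε → a < b → mk ε a b ∈ F)
    (h2 : ∀ ε a b : ℝ, 0 < ε → Set.Icc a b ⊆ mk ε a b)
    (h3 : ∀ ε a b : ℝ, 0 < ε → mk ε a b ⊆ Set.Icc (a - ε) (b + ε))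
    (h : IsMBigraph IccFam E) : IsMBigraph F E := by
  classical
  obtain ⟨f, hf, he⟩ := h
  choose a b hab hfeq using hf
  set S : Finset ℝ := (Finset.univ.image a) ∪ (Finset.univ.image b) with hS
  obtain ⟨ε, hε, hgap⟩ := exists_eps S
  have haS : ∀ v, a v ∈ S := fun v =>
    Finset.mem_union_left _ (Finset.mem_image_of_mem a (Finset.mem_univ v))
  have hbS : ∀ v, b v ∈ S := fun v =>
    Finset.mem_union_right _ (Finset.mem_image_of_mem b (Finset.mem_univ v))
  refine ⟨fun v => mk ε (a v) (b v), fun v => h1 ε _ _ hε (hab v), fun x y => ?_⟩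
  rw [he x y]
  set u := Sum.inl x (α := X) (β := Y)
  set w := Sum.inr y (α := X) (β := Y)
  constructor
  · rintro ⟨t, htu, htw⟩
    rw [hfeq u] at htu; rw [hfeq w] at htw
    exact ⟨t, h2 ε _ _ hε htu, h2 ε _ _ hε htw⟩
  · rintro ⟨s, hsu, hsw⟩
    have hu := h3 ε _ _ hε hsu
    have hw := h3 ε _ _ hε hsw
    have hub : a u ≤ b w := by
      by_contra hc
      push_neg at hc
      have := hgap (b w) (hbS w) (a u) (haS u) hc
      have := hu.1; have := hw.2
      linarith
    have hwb : a w ≤ b u := by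
      by_contra hc
      push_neg at hc
      have := hgap (b u) (hbS u) (a w) (haS w) hc
      have := hw.1; have := hu.2
      linarith
    refine ⟨max (a u) (a w), ?_, ?_⟩
    · rw [hfeq u]
      exact ⟨le_max_left _ _, max_le (hab u).le hwb⟩
    · rw [hfeq w]
      exact ⟨le_max_right _ _, max_le hub (hab w).le⟩

/-- The classes of `𝓘⁺⁺`-, `𝓘⁻⁻`-, `𝓘⁺⁻`-, `𝓘⁻⁺`-, `𝓘^±`- and `𝓘`-bigraphs coincide. -/
theorem interval_bigraph_classes_coincide {X Y : Type} [Fintype X] [Fintype Y]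
    (E : X → Y → Prop) :
    List.TFAE [IsMBigraph IccFam E, IsMBigraph IooFam E, IsMBigraph IcoFam E,
      IsMBigraph IocFam E, IsMBigraph (IccFam ∪ IooFam) E,
      IsMBigraph (IccFam ∪ IooFam ∪ IcoFam ∪ IocFam) E] := by
  tfae_have 1 → 2 := by
    intro h
    refine closed_to_gen IooFam (fun ε a b => Set.Ioo (a - ε) (b + ε)) ?_ ?_ ?_ h
    · intro ε a b hε hab; exact ⟨a - ε, b + ε, by linarith, rfl⟩
    · intro ε a b hε t ht; exact ⟨by linarith [ht.1], by linarith [ht.2]⟩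
    · intro ε a b hε; exact Set.Ioo_subset_Icc_self
  tfae_have 1 → 3 := by
    intro h
    refine closed_to_gen IcoFam (fun ε a b => Set.Ico a (b + ε)) ?_ ?_ ?_ h
    · intro ε a b hε hab; exact ⟨a, b + ε, by linarith, rfl⟩
    · intro ε a b hε t ht; exact ⟨ht.1, by linarith [ht.2]⟩
    · intro ε a b hε t ht; exact ⟨by linarith [ht.1], ht.2.le⟩
  tfae_have 1 → 4 := by
    intro h
    refine closed_to_gen IocFam (fun ε a b => Set.Ioc (a - ε) b) ?_ ?_ ?_ h
    · intro ε a b hε hab; exact ⟨a - ε, b, by linarith, rfl⟩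
    · intro ε a b hε t ht; exact ⟨by linarith [ht.1], ht.2⟩
    · intro ε a b hε t ht; exact ⟨ht.1.le, by linarith [ht.2]⟩
  tfae_have 1 → 5 := fun h => isMBigraph_mono Set.subset_union_left h
  tfae_have 2 → 6 := fun h => isMBigraph_mono (fun s hs => Or.inl (Or.inl (Or.inr hs))) h
  tfae_have 3 → 6 := fun h => isMBigraph_mono (fun s hs => Or.inl (Or.inr hs)) h
  tfae_have 4 → 6 := fun h => isMBigraph_mono (fun s hs => Or.inr hs) h
  tfae_have 5 → 6 := fun h => isMBigraph_mono (fun s hs => Or.inl (Or.inl hs)) h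
  tfae_have 6 → 1 := mixed_to_closed
  tfae_finish
end

section
/- For every bigraph B, the following are equivalent: B is a 𝓤⁺⁺-bigraph; B is a 𝓤⁻⁻-bigraph; B is a 𝓤⁺⁻-bigraph; B is a 𝓤⁻⁺-bigraph; B is a (𝓤⁺⁻ ∪ 𝓤⁻⁺)-bigraph. In other words, for unit intervals of a single fixed type (all closed, all open, all closed-open, all open-closed) or of the two half-open types mixed, the resulting classes of intersection bigraphs coincide. -/
/-- `𝓤⁺⁺`: the family of closed unit intervals `[a, a+1]`. -/
def UnitCC : Set (Set ℝ) := {s | ∃ a : ℝ, s = Set.Icc a (a + 1)}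

/-- `𝓤⁻⁻`: the family of open unit intervals `(a, a+1)`. -/
def UnitOO : Set (Set ℝ) := {s | ∃ a : ℝ, s = Set.Ioo a (a + 1)}

/-- `𝓤⁺⁻`: the family of closed-open unit intervals `[a, a+1)`. -/
def UnitCO : Set (Set ℝ) := {s | ∃ a : ℝ, s = Set.Ico a (a + 1)}

/-- `𝓤⁻⁺`: the family of open-closed unit intervals `(a, a+1]`. -/
def UnitOC : Set (Set ℝ) := {s | ∃ a : ℝ, s = Set.Ioc a (a + 1)}

lemma inter_Icc (a b : ℝ) :
    (Set.Icc a (a+1) ∩ Set.Icc b (b+1)).Nonempty ↔ |a - b| ≤ 1 := by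
  rw [abs_sub_le_iff]
  constructor
  · rintro ⟨t, ⟨h1, h2⟩, ⟨h3, h4⟩⟩
    constructor <;> linarith
  · rintro ⟨h1, h2⟩
    exact ⟨(a+b+1)/2, ⟨by linarith, by linarith⟩, ⟨by linarith, by linarith⟩⟩

lemma inter_Ioo (a b : ℝ) :
    (Set.Ioo a (a+1) ∩ Set.Ioo b (b+1)).Nonempty ↔ |a - b| < 1 := by
  rw [abs_sub_lt_iff]
  constructor
  · rintro ⟨t, ⟨h1, h2⟩, ⟨h3, h4⟩⟩
    constructor <;> linarith
  · rintro ⟨h1, h2⟩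
    exact ⟨(a+b+1)/2, ⟨by linarith, by linarith⟩, ⟨by linarith, by linarith⟩⟩

lemma inter_Ico (a b : ℝ) :
    (Set.Ico a (a+1) ∩ Set.Ico b (b+1)).Nonempty ↔ |a - b| < 1 := by
  rw [abs_sub_lt_iff]
  constructor
  · rintro ⟨t, ⟨h1, h2⟩, ⟨h3, h4⟩⟩
    constructor <;> linarith
  · rintro ⟨h1, h2⟩
    exact ⟨(a+b+1)/2, ⟨by linarith, by linarith⟩, ⟨by linarith, by linarith⟩⟩

lemma inter_Ioc (a b : ℝ) :
    (Set.Ioc a (a+1) ∩ Set.Ioc b (b+1)).Nonempty ↔ |a - b| < 1 := by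
  rw [abs_sub_lt_iff]
  constructor
  · rintro ⟨t, ⟨h1, h2⟩, ⟨h3, h4⟩⟩
    constructor <;> linarith
  · rintro ⟨h1, h2⟩
    exact ⟨(a+b+1)/2, ⟨by linarith, by linarith⟩, ⟨by linarith, by linarith⟩⟩

lemma inter_Ico_Ioc (a b : ℝ) :
    (Set.Ico a (a+1) ∩ Set.Ioc b (b+1)).Nonempty ↔ (-1 < a - b ∧ a - b ≤ 1) := by
  constructor
  · rintro ⟨t, ⟨h1, h2⟩, ⟨h3, h4⟩⟩
    constructor <;> linarith
  · rintro ⟨h1, h2⟩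
    exact ⟨(a+b+1)/2, ⟨by linarith, by linarith⟩, ⟨by linarith, by linarith⟩⟩

lemma inter_Ioc_Ico (a b : ℝ) :
    (Set.Ioc a (a+1) ∩ Set.Ico b (b+1)).Nonempty ↔ (-1 ≤ a - b ∧ a - b < 1) := by
  constructor
  · rintro ⟨t, ⟨h1, h2⟩, ⟨h3, h4⟩⟩
    constructor <;> linarith
  · rintro ⟨h1, h2⟩
    exact ⟨(a+b+1)/2, ⟨by linarith, by linarith⟩, ⟨by linarith, by linarith⟩⟩

lemma exists_eps_s1 (s : Finset ℝ) (hs : ∀ x ∈ s, 0 < x) :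
    ∃ ε : ℝ, 0 < ε ∧ ε < 1 ∧ ∀ x ∈ s, ε < x := by
  classical
  have htne : (insert (1:ℝ) s).Nonempty := ⟨1, Finset.mem_insert_self _ _⟩
  have hpos : 0 < (insert (1:ℝ) s).min' htne := by
    rcases Finset.mem_insert.mp ((insert (1:ℝ) s).min'_mem htne) with h | h
    · rw [h]; norm_num
    · exact hs _ h
  refine ⟨(insert (1:ℝ) s).min' htne / 2, by linarith, ?_, ?_⟩
  · have h1 : (insert (1:ℝ) s).min' htne ≤ 1 :=
      Finset.min'_le _ _ (Finset.mem_insert_self _ _)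
    linarith
  · intro x hx
    have := Finset.min'_le (insert (1:ℝ) s) x (Finset.mem_insert_of_mem hx)
    linarith

lemma arith_same (D ε : ℝ) (hε0 : 0 < ε) (hth : 0 < 1 - D → ε < 1 - D) :
    D < 1 ↔ D ≤ 1 - ε := by
  constructor
  · intro h; have := hth (by linarith); linarith
  · intro h; linarith

lemma arith_co_oc (d ε : ℝ) (hε0 : 0 < ε) (hth : 0 < (d+1)/2 → ε < (d+1)/2) :
    (-1 < d ∧ d ≤ 1) ↔ |d - ε| ≤ 1 - ε := by
  rw [abs_le]
  constructor
  · rintro ⟨h1, h2⟩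
    have := hth (by linarith)
    constructor <;> linarith
  · rintro ⟨h1, h2⟩
    constructor <;> linarith

lemma arith_oc_co (d ε : ℝ) (hε0 : 0 < ε) (hth : 0 < (1-d)/2 → ε < (1-d)/2) :
    (-1 ≤ d ∧ d < 1) ↔ |d + ε| ≤ 1 - ε := by
  rw [abs_le]
  constructor
  · rintro ⟨h1, h2⟩
    have := hth (by linarith)
    constructor <;> linarith
  · rintro ⟨h1, h2⟩
    constructor <;> linarith

/-- The classes of `𝓤⁺⁺`-, `𝓤⁻⁻`-, `𝓤⁺⁻`-, `𝓤⁻⁺`- and `𝓤⁺⁻ ∪ 𝓤⁻⁺`-bigraphs coincide. -/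
theorem unit_interval_bigraph_classes_coincide {X Y : Type} [Fintype X] [Fintype Y]
    (E : X → Y → Prop) :
    List.TFAE [IsMBigraph UnitCC E, IsMBigraph UnitOO E, IsMBigraph UnitCO E,
      IsMBigraph UnitOC E, IsMBigraph (UnitCO ∪ UnitOC) E] := by
  classical
  tfae_have 1 → 2
  · rintro ⟨f, hf, hE⟩
    have hf' : ∀ v, ∃ a : ℝ, f v = Set.Icc a (a + 1) := hf
    choose a ha using hf'
    have hE' : ∀ x y, E x y ↔ |a (Sum.inl x) - a (Sum.inr y)| ≤ 1 := by
      intro x y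
      rw [hE x y, ha (Sum.inl x), ha (Sum.inr y), inter_Icc]
    set s : Finset ℝ :=
      (Finset.univ.image fun q : X × Y =>
        (|a (Sum.inl q.1) - a (Sum.inr q.2)| - 1) / |a (Sum.inl q.1) - a (Sum.inr q.2)|)
        |>.filter (0 < ·) with hs_def
    obtain ⟨ε, hε0, hε1, hεs⟩ := exists_eps_s1 s (fun x hx => (Finset.mem_filter.mp hx).2)
    have h1ε : 0 < 1 - ε := by linarith
    refine ⟨fun v => Set.Ioo ((1 - ε) * a v) ((1 - ε) * a v + 1),
      fun v => ⟨(1 - ε) * a v, rfl⟩, fun x y => ?_⟩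
    rw [hE' x y, inter_Ioo]
    have key : |(1 - ε) * a (Sum.inl x) - (1 - ε) * a (Sum.inr y)|
        = (1 - ε) * |a (Sum.inl x) - a (Sum.inr y)| := by
      rw [← mul_sub, abs_mul, abs_of_pos h1ε]
    rw [key]
    have hD : (0:ℝ) ≤ |a (Sum.inl x) - a (Sum.inr y)| := abs_nonneg _
    constructor
    · intro h
      nlinarith
    · intro h
      by_contra hle
      push_neg at hle
      have hmem : (|a (Sum.inl x) - a (Sum.inr y)| - 1) / |a (Sum.inl x) - a (Sum.inr y)| ∈ s := by
        refine Finset.mem_filter.mpr ⟨Finset.mem_image_of_mem _ (Finset.mem_univ (x, y)), ?_⟩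
        exact div_pos (by linarith) (by linarith)
      have h2 := hεs _ hmem
      rw [lt_div_iff₀ (by linarith : (0:ℝ) < |a (Sum.inl x) - a (Sum.inr y)|)] at h2
      nlinarith
  tfae_have 2 → 3
  · rintro ⟨f, hf, hE⟩
    have hf' : ∀ v, ∃ a : ℝ, f v = Set.Ioo a (a + 1) := hf
    choose a ha using hf'
    refine ⟨fun v => Set.Ico (a v) (a v + 1), fun v => ⟨a v, rfl⟩, fun x y => ?_⟩
    rw [hE x y, ha (Sum.inl x), ha (Sum.inr y), inter_Ioo, inter_Ico]
  tfae_have 3 → 4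
  · rintro ⟨f, hf, hE⟩
    have hf' : ∀ v, ∃ a : ℝ, f v = Set.Ico a (a + 1) := hf
    choose a ha using hf'
    refine ⟨fun v => Set.Ioc (a v) (a v + 1), fun v => ⟨a v, rfl⟩, fun x y => ?_⟩
    rw [hE x y, ha (Sum.inl x), ha (Sum.inr y), inter_Ico, inter_Ioc]
  tfae_have 4 → 5
  · rintro ⟨f, hf, hE⟩
    exact ⟨f, fun v => Or.inr (hf v), hE⟩
  tfae_have 5 → 1
  · rintro ⟨f, hf, hE⟩
    have hf' : ∀ v, ∃ p : ℝ × Bool,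
        f v = if p.2 then Set.Ico p.1 (p.1 + 1) else Set.Ioc p.1 (p.1 + 1) := by
      intro v
      rcases hf v with h | h
      · obtain ⟨c, hc⟩ := h; exact ⟨(c, true), hc⟩
      · obtain ⟨c, hc⟩ := h; exact ⟨(c, false), hc⟩
    choose p hp using hf'
    set s : Finset ℝ :=
      ((Finset.univ.image fun q : X × Y =>
          1 - |(p (Sum.inl q.1)).1 - (p (Sum.inr q.2)).1|) ∪
       (Finset.univ.image fun q : X × Y =>
          ((p (Sum.inl q.1)).1 - (p (Sum.inr q.2)).1 + 1) / 2) ∪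
       (Finset.univ.image fun q : X × Y =>
          (1 - ((p (Sum.inl q.1)).1 - (p (Sum.inr q.2)).1)) / 2)).filter (0 < ·) with hs_def
    obtain ⟨ε, hε0, hε1, hεs⟩ := exists_eps_s1 s (fun x hx => (Finset.mem_filter.mp hx).2)
    have h1ε : 0 < 1 - ε := by linarith
    refine ⟨fun v => Set.Icc (((p v).1 + if (p v).2 then 0 else ε) / (1 - ε))
        ((((p v).1 + if (p v).2 then 0 else ε) / (1 - ε)) + 1),
      fun v => ⟨_, rfl⟩, fun x y => ?_⟩
    rw [hE x y, hp (Sum.inl x), hp (Sum.inr y), inter_Icc, div_sub_div_same, abs_div,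
      abs_of_pos h1ε, div_le_one h1ε]
    have hth1 : 0 < 1 - |(p (Sum.inl x)).1 - (p (Sum.inr y)).1| →
        ε < 1 - |(p (Sum.inl x)).1 - (p (Sum.inr y)).1| := by
      intro h
      exact hεs _ (Finset.mem_filter.mpr ⟨Finset.mem_union_left _ (Finset.mem_union_left _
        (Finset.mem_image_of_mem _ (Finset.mem_univ (x, y)))), h⟩)
    have hth2 : 0 < ((p (Sum.inl x)).1 - (p (Sum.inr y)).1 + 1) / 2 →
        ε < ((p (Sum.inl x)).1 - (p (Sum.inr y)).1 + 1) / 2 := by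
      intro h
      exact hεs _ (Finset.mem_filter.mpr ⟨Finset.mem_union_left _ (Finset.mem_union_right _
        (Finset.mem_image_of_mem _ (Finset.mem_univ (x, y)))), h⟩)
    have hth3 : 0 < (1 - ((p (Sum.inl x)).1 - (p (Sum.inr y)).1)) / 2 →
        ε < (1 - ((p (Sum.inl x)).1 - (p (Sum.inr y)).1)) / 2 := by
      intro h
      exact hεs _ (Finset.mem_filter.mpr ⟨Finset.mem_union_right _
        (Finset.mem_image_of_mem _ (Finset.mem_univ (x, y))), h⟩)
    cases hbx : (p (Sum.inl x)).2 <;> cases hby : (p (Sum.inr y)).2 <;>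
      simp only [hbx, hby, if_true, if_false, Bool.false_eq_true, add_zero, ite_true, ite_false]
    · -- x Ioc, y Ioc : diff = d
      rw [inter_Ioc]
      have e : (p (Sum.inl x)).1 + ε - ((p (Sum.inr y)).1 + ε)
          = (p (Sum.inl x)).1 - (p (Sum.inr y)).1 := by ring
      rw [e]
      exact arith_same _ ε hε0 hth1
    · -- x Ioc, y Ico : diff = d + ε
      rw [inter_Ioc_Ico]
      have e : (p (Sum.inl x)).1 + ε - (p (Sum.inr y)).1
          = ((p (Sum.inl x)).1 - (p (Sum.inr y)).1) + ε := by ring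
      rw [e]
      exact arith_oc_co _ ε hε0 hth3
    · -- x Ico, y Ioc : diff = d - ε
      rw [inter_Ico_Ioc]
      have e : (p (Sum.inl x)).1 - ((p (Sum.inr y)).1 + ε)
          = ((p (Sum.inl x)).1 - (p (Sum.inr y)).1) - ε := by ring
      rw [e]
      exact arith_co_oc _ ε hε0 hth2
    · -- x Ico, y Ico
      rw [inter_Ico]
      exact arith_same _ ε hε0 hth1
  tfae_finish
end

section
/- The bipartite claw H₁ is a 𝓤^±-bigraph but is not a 𝓤⁺⁺-bigraph (i.e., it is not a unit interval bigraph). -/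
/-- `𝓤`: all unit intervals of the four types. -/
def UnitFam : Set (Set ℝ) := UnitCC ∪ UnitOO ∪ UnitCO ∪ UnitOC

/-- The bipartite claw `H₁`: `X = {x₁, x₂, x₃, x₄}` (indices `0,1,2,3`),
`Y = {y₁, y₂, y₃}` (indices `0,1,2`), edges `x₄y₁, x₄y₂, x₄y₃, x₁y₁, x₂y₂, x₃y₃`. -/
def H1E : Fin 4 → Fin 3 → Prop := fun x y =>
  (x.val, y.val) ∈ ([(3, 0), (3, 1), (3, 2), (0, 0), (1, 1), (2, 2)] : List (ℕ × ℕ))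

lemma key (a b : ℝ) :
    (Set.Icc a (a+1) ∩ Set.Icc b (b+1)).Nonempty ↔ (a ≤ b+1 ∧ b ≤ a+1) := by
  simp only [Set.Icc_inter_Icc, Set.nonempty_Icc, sup_le_iff, le_inf_iff]
  constructor
  · rintro ⟨h1, h2⟩; exact ⟨by tauto, by tauto⟩
  · rintro ⟨h1, h2⟩; refine ⟨⟨?_, ?_⟩, ?_, ?_⟩ <;> linarith

/-- The bipartite claw is a `𝓤^±`-bigraph but not a unit interval bigraph. -/
theorem bipartite_claw_UPM_not_unit :
    IsMBigraph (UnitCC ∪ UnitOO) H1E ∧ ¬ IsMBigraph UnitCC H1E := by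
  constructor
  · refine ⟨fun v => match v with
      | Sum.inl 0 => Set.Icc (-2) (-1)
      | Sum.inl 1 => Set.Ioo 0 1
      | Sum.inl 2 => Set.Icc 2 3
      | Sum.inl 3 => Set.Icc 0 1
      | Sum.inr 0 => Set.Icc (-1) 0
      | Sum.inr 1 => Set.Ioo 0 1
      | Sum.inr 2 => Set.Icc 1 2, ?_, ?_⟩
    · rintro (v | w)
      · fin_cases v
        · exact Or.inl ⟨-2, by norm_num [Set.mem_inter_iff, Set.mem_Icc, Set.mem_Ioo]⟩
        · exact Or.inr ⟨0, by norm_num [Set.mem_inter_iff, Set.mem_Icc, Set.mem_Ioo]⟩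
        · exact Or.inl ⟨2, by norm_num [Set.mem_inter_iff, Set.mem_Icc, Set.mem_Ioo]⟩
        · exact Or.inl ⟨0, by norm_num [Set.mem_inter_iff, Set.mem_Icc, Set.mem_Ioo]⟩
      · fin_cases w
        · exact Or.inl ⟨-1, by norm_num [Set.mem_inter_iff, Set.mem_Icc, Set.mem_Ioo]⟩
        · exact Or.inr ⟨0, by norm_num [Set.mem_inter_iff, Set.mem_Icc, Set.mem_Ioo]⟩
        · exact Or.inl ⟨1, by norm_num [Set.mem_inter_iff, Set.mem_Icc, Set.mem_Ioo]⟩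
    · intro x y
      fin_cases x <;> fin_cases y
      · exact iff_of_true (by unfold H1E; decide) ⟨-1, by norm_num [Set.mem_inter_iff, Set.mem_Icc, Set.mem_Ioo]⟩
      · refine iff_of_false (by unfold H1E; decide) ?_
        rintro ⟨z, hz⟩
        simp only [Set.mem_inter_iff, Set.mem_Icc, Set.mem_Ioo] at hz
        linarith [hz.1.1, hz.1.2, hz.2.1, hz.2.2]
      · refine iff_of_false (by unfold H1E; decide) ?_
        rintro ⟨z, hz⟩
        simp only [Set.mem_inter_iff, Set.mem_Icc, Set.mem_Ioo] at hz
        linarith [hz.1.1, hz.1.2, hz.2.1, hz.2.2]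
      · refine iff_of_false (by unfold H1E; decide) ?_
        rintro ⟨z, hz⟩
        simp only [Set.mem_inter_iff, Set.mem_Icc, Set.mem_Ioo] at hz
        linarith [hz.1.1, hz.1.2, hz.2.1, hz.2.2]
      · exact iff_of_true (by unfold H1E; decide) ⟨(1:ℝ)/2, by norm_num [Set.mem_inter_iff, Set.mem_Icc, Set.mem_Ioo]⟩
      · refine iff_of_false (by unfold H1E; decide) ?_
        rintro ⟨z, hz⟩
        simp only [Set.mem_inter_iff, Set.mem_Icc, Set.mem_Ioo] at hz
        linarith [hz.1.1, hz.1.2, hz.2.1, hz.2.2]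
      · refine iff_of_false (by unfold H1E; decide) ?_
        rintro ⟨z, hz⟩
        simp only [Set.mem_inter_iff, Set.mem_Icc, Set.mem_Ioo] at hz
        linarith [hz.1.1, hz.1.2, hz.2.1, hz.2.2]
      · refine iff_of_false (by unfold H1E; decide) ?_
        rintro ⟨z, hz⟩
        simp only [Set.mem_inter_iff, Set.mem_Icc, Set.mem_Ioo] at hz
        linarith [hz.1.1, hz.1.2, hz.2.1, hz.2.2]
      · exact iff_of_true (by unfold H1E; decide) ⟨2, by norm_num [Set.mem_inter_iff, Set.mem_Icc, Set.mem_Ioo]⟩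
      · exact iff_of_true (by unfold H1E; decide) ⟨0, by norm_num [Set.mem_inter_iff, Set.mem_Icc, Set.mem_Ioo]⟩
      · exact iff_of_true (by unfold H1E; decide) ⟨(1:ℝ)/2, by norm_num [Set.mem_inter_iff, Set.mem_Icc, Set.mem_Ioo]⟩
      · exact iff_of_true (by unfold H1E; decide) ⟨1, by norm_num [Set.mem_inter_iff, Set.mem_Icc, Set.mem_Ioo]⟩
  · rintro ⟨f, hmem, hedge⟩
    obtain ⟨a0, ha0⟩ := hmem (Sum.inl 0)
    obtain ⟨a1, ha1⟩ := hmem (Sum.inl 1)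
    obtain ⟨a2, ha2⟩ := hmem (Sum.inl 2)
    obtain ⟨a3, ha3⟩ := hmem (Sum.inl 3)
    obtain ⟨b0, hb0⟩ := hmem (Sum.inr 0)
    obtain ⟨b1, hb1⟩ := hmem (Sum.inr 1)
    obtain ⟨b2, hb2⟩ := hmem (Sum.inr 2)
    have e30 := (hedge 3 0).mp (by unfold H1E; decide); rw [ha3, hb0, key] at e30
    have e31 := (hedge 3 1).mp (by unfold H1E; decide); rw [ha3, hb1, key] at e31
    have e32 := (hedge 3 2).mp (by unfold H1E; decide); rw [ha3, hb2, key] at e32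
    have e00 := (hedge 0 0).mp (by unfold H1E; decide); rw [ha0, hb0, key] at e00
    have e11 := (hedge 1 1).mp (by unfold H1E; decide); rw [ha1, hb1, key] at e11
    have e22 := (hedge 2 2).mp (by unfold H1E; decide); rw [ha2, hb2, key] at e22
    have n01 : ¬ (f (Sum.inl 0) ∩ f (Sum.inr 1)).Nonempty :=
      fun h => (by unfold H1E; decide : ¬ H1E 0 1) ((hedge 0 1).mpr h)
    have n02 : ¬ (f (Sum.inl 0) ∩ f (Sum.inr 2)).Nonempty :=
      fun h => (by unfold H1E; decide : ¬ H1E 0 2) ((hedge 0 2).mpr h)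
    have n10 : ¬ (f (Sum.inl 1) ∩ f (Sum.inr 0)).Nonempty :=
      fun h => (by unfold H1E; decide : ¬ H1E 1 0) ((hedge 1 0).mpr h)
    have n12 : ¬ (f (Sum.inl 1) ∩ f (Sum.inr 2)).Nonempty :=
      fun h => (by unfold H1E; decide : ¬ H1E 1 2) ((hedge 1 2).mpr h)
    have n20 : ¬ (f (Sum.inl 2) ∩ f (Sum.inr 0)).Nonempty :=
      fun h => (by unfold H1E; decide : ¬ H1E 2 0) ((hedge 2 0).mpr h)
    have n21 : ¬ (f (Sum.inl 2) ∩ f (Sum.inr 1)).Nonempty :=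
      fun h => (by unfold H1E; decide : ¬ H1E 2 1) ((hedge 2 1).mpr h)
    rw [ha0, hb1, key, not_and_or, not_le, not_le] at n01
    rw [ha0, hb2, key, not_and_or, not_le, not_le] at n02
    rw [ha1, hb0, key, not_and_or, not_le, not_le] at n10
    rw [ha1, hb2, key, not_and_or, not_le, not_le] at n12
    rw [ha2, hb0, key, not_and_or, not_le, not_le] at n20
    rw [ha2, hb1, key, not_and_or, not_le, not_le] at n21
    rcases n01 with h01 | h01 <;> rcases n02 with h02 | h02 <;>
      rcases n10 with h10 | h10 <;> rcases n12 with h12 | h12 <;>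
      rcases n20 with h20 | h20 <;> rcases n21 with h21 | h21 <;>
      linarith [e30.1, e30.2, e31.1, e31.2, e32.1, e32.2,
        e00.1, e00.2, e11.1, e11.2, e22.1, e22.2]
end

section
/- The bipartite tent H₃ is a 𝓤^±-bigraph but is not a 𝓤⁺⁺-bigraph (i.e., it is not a unit interval bigraph). -/
/-- The bipartite tent `H₃`: `X = {x₁, x₂, x₃, x₄}` (indices `0,1,2,3`),
`Y = {y₁, y₂, y₃}` (indices `0,1,2`), edges
`x₄y₁, x₄y₂, x₄y₃, x₂y₁, x₂y₂, x₃y₁, x₃y₃, x₁y₁`. -/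
def H3E : Fin 4 → Fin 3 → Prop := fun x y =>
  (x.val, y.val) ∈
    ([(3, 0), (3, 1), (3, 2), (1, 0), (1, 1), (2, 0), (2, 2), (0, 0)] : List (ℕ × ℕ))

/-- representation function for the positive half -/
noncomputable def tentRep : Fin 4 ⊕ Fin 3 → Set ℝ
  | .inl 0 => Set.Icc 1 2
  | .inl 1 => Set.Icc 0 1
  | .inl 2 => Set.Icc (-1) 0
  | .inl 3 => Set.Icc (-(1/2)) (1/2)
  | .inr 0 => Set.Icc 0 1
  | .inr 1 => Set.Ioo 0 1
  | .inr 2 => Set.Ioo (-1) 0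

lemma icc_inter_icc_nonempty (a b : ℝ) :
    (Set.Icc a (a+1) ∩ Set.Icc b (b+1)).Nonempty ↔ a ≤ b + 1 ∧ b ≤ a + 1 := by
  constructor
  · rintro ⟨t, ⟨h1, h2⟩, ⟨h3, h4⟩⟩
    exact ⟨by linarith, by linarith⟩
  · rintro ⟨h1, h2⟩
    refine ⟨max a b, ⟨le_max_left _ _, ?_⟩, ⟨le_max_right _ _, ?_⟩⟩ <;>
      · rw [max_le_iff]; exact ⟨by linarith, by linarith⟩

/-- The bipartite tent is a `𝓤^±`-bigraph but not a unit interval bigraph. -/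
theorem bipartite_tent_UPM_not_unit :
    IsMBigraph (UnitCC ∪ UnitOO) H3E ∧ ¬ IsMBigraph UnitCC H3E := by
  constructor
  · refine ⟨tentRep, ?_, ?_⟩
    · rintro (v | w)
      · fin_cases v
        · exact Or.inl ⟨1, by norm_num [tentRep]⟩
        · exact Or.inl ⟨0, by norm_num [tentRep]⟩
        · exact Or.inl ⟨-1, by norm_num [tentRep]⟩
        · exact Or.inl ⟨-(1/2), by norm_num [tentRep]⟩
      · fin_cases w
        · exact Or.inl ⟨0, by norm_num [tentRep]⟩
        · exact Or.inr ⟨0, by norm_num [tentRep]⟩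
        · exact Or.inr ⟨-1, by norm_num [tentRep]⟩
    · intro x y
      fin_cases x <;> fin_cases y
      · exact iff_of_true (by simp [H3E]) ⟨1, by norm_num [tentRep]⟩
      · exact iff_of_false (by simp [H3E])
          (by rintro ⟨t, h1, h2⟩; simp [tentRep] at h1 h2; linarith)
      · exact iff_of_false (by simp [H3E])
          (by rintro ⟨t, h1, h2⟩; simp [tentRep] at h1 h2; linarith)
      · exact iff_of_true (by simp [H3E]) ⟨0, by norm_num [tentRep]⟩
      · exact iff_of_true (by simp [H3E]) ⟨1/2, by norm_num [tentRep]⟩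
      · exact iff_of_false (by simp [H3E])
          (by rintro ⟨t, h1, h2⟩; simp [tentRep] at h1 h2; linarith)
      · exact iff_of_true (by simp [H3E]) ⟨0, by norm_num [tentRep]⟩
      · exact iff_of_false (by simp [H3E])
          (by rintro ⟨t, h1, h2⟩; simp [tentRep] at h1 h2; linarith)
      · exact iff_of_true (by simp [H3E]) ⟨-(1/2), by norm_num [tentRep]⟩
      · exact iff_of_true (by simp [H3E]) ⟨0, by norm_num [tentRep]⟩
      · exact iff_of_true (by simp [H3E]) ⟨1/4, by norm_num [tentRep]⟩
      · exact iff_of_true (by simp [H3E]) ⟨-(1/4), by norm_num [tentRep]⟩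
  · rintro ⟨f, hmem, hE⟩
    -- extract endpoints
    choose g hg using hmem
    have key : ∀ x y, H3E x y ↔ (g (Sum.inl x) ≤ g (Sum.inr y) + 1 ∧
        g (Sum.inr y) ≤ g (Sum.inl x) + 1) := by
      intro x y
      rw [hE x y, hg (Sum.inl x), hg (Sum.inr y), icc_inter_icc_nonempty]
    set A0 := g (Sum.inl 0)
    set A1 := g (Sum.inl 1)
    set A2 := g (Sum.inl 2)
    set A3 := g (Sum.inl 3)
    set B0 := g (Sum.inr 0)
    set B1 := g (Sum.inr 1)
    set B2 := g (Sum.inr 2)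
    have e30 := (key 3 0).mp (by unfold H3E; decide)
    have e31 := (key 3 1).mp (by unfold H3E; decide)
    have e32 := (key 3 2).mp (by unfold H3E; decide)
    have e10 := (key 1 0).mp (by unfold H3E; decide)
    have e11 := (key 1 1).mp (by unfold H3E; decide)
    have e20 := (key 2 0).mp (by unfold H3E; decide)
    have e22 := (key 2 2).mp (by unfold H3E; decide)
    have e00 := (key 0 0).mp (by unfold H3E; decide)
    have n12 : ¬ (A1 ≤ B2 + 1 ∧ B2 ≤ A1 + 1) := fun h => (by unfold H3E; decide : ¬ H3E 1 2) ((key 1 2).mpr h)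
    have n21 : ¬ (A2 ≤ B1 + 1 ∧ B1 ≤ A2 + 1) := fun h => (by unfold H3E; decide : ¬ H3E 2 1) ((key 2 1).mpr h)
    have n01 : ¬ (A0 ≤ B1 + 1 ∧ B1 ≤ A0 + 1) := fun h => (by unfold H3E; decide : ¬ H3E 0 1) ((key 0 1).mpr h)
    have n02 : ¬ (A0 ≤ B2 + 1 ∧ B2 ≤ A0 + 1) := fun h => (by unfold H3E; decide : ¬ H3E 0 2) ((key 0 2).mpr h)
    rw [not_and_or, not_le, not_le] at n12 n21 n01 n02
    obtain ⟨e30l, e30r⟩ := e30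
    obtain ⟨e31l, e31r⟩ := e31
    obtain ⟨e32l, e32r⟩ := e32
    obtain ⟨e10l, e10r⟩ := e10
    obtain ⟨e11l, e11r⟩ := e11
    obtain ⟨e20l, e20r⟩ := e20
    obtain ⟨e22l, e22r⟩ := e22
    obtain ⟨e00l, e00r⟩ := e00
    rcases n12 with h12 | h12 <;> rcases n21 with h21 | h21 <;>
      rcases n01 with h01 | h01 <;> rcases n02 with h02 | h02 <;> linarith
end

section
/- The bigraph F₆ is a 𝓤-bigraph (a mixed unit interval bigraph) but is not a 𝓤^±-bigraph. Consequently the class of mixed unit interval bigraphs properly contains the class of 𝓤^±-bigraphs. -/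
/-- The bigraph `F₆`: `X = {x₁, …, x₅}` (indices `0,…,4`),
`Y = {y₁, …, y₅}` (indices `0,…,4`), edges
`x₃y₄, x₃y₁, x₃y₃, x₂y₁, x₂y₂, x₄y₂, x₄y₃, x₄y₁, x₁y₁, x₂y₅, x₄y₅, x₅y₅`. -/
def F6E : Fin 5 → Fin 5 → Prop := fun x y =>
  (x.val, y.val) ∈
    ([(2, 3), (2, 0), (2, 2), (1, 0), (1, 1), (3, 1), (3, 2), (3, 0), (0, 0),
      (1, 4), (3, 4), (4, 4)] : List (ℕ × ℕ))


def UInt' (c : Bool) (p : ℝ) : Set ℝ := cond c (Set.Icc p (p + 1)) (Set.Ioo p (p + 1))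

def ECond (cp cq : Bool) (p q : ℝ) : Prop :=
  p ≤ q + 1 ∧ q ≤ p + 1 ∧ ((p = q + 1 ∨ q = p + 1) → (cp = true ∧ cq = true))

def NCond (cp cq : Bool) (p q : ℝ) : Prop :=
  (q + 1 ≤ p ∨ p + 1 ≤ q) ∧ ((p = q + 1 ∨ q = p + 1) → ¬(cp = true ∧ cq = true))

lemma NCond_of_not {cp cq : Bool} {p q : ℝ} (h : ¬ ECond cp cq p q) : NCond cp cq p q := by
  constructor
  · by_contra hw
    push_neg at hw
    exact h ⟨by linarith [hw.1], by linarith [hw.2], fun heq => by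
      rcases heq with h1 | h1 <;> [exact absurd h1 (by linarith [hw.1]); exact absurd h1 (by linarith [hw.2])]⟩
  · intro heq hcc
    apply h
    rcases heq with h1 | h1
    · exact ⟨le_of_eq h1, by linarith, fun _ => hcc⟩
    · exact ⟨by linarith, le_of_eq h1, fun _ => hcc⟩

lemma ECond_neg {cp cq : Bool} {p q : ℝ} (h : ECond cp cq p q) : ECond cp cq (-p) (-q) := by
  obtain ⟨h1, h2, h3⟩ := h
  exact ⟨by linarith, by linarith,
    fun heq => h3 (heq.elim (fun hh => Or.inr (by linarith)) (fun hh => Or.inl (by linarith)))⟩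

lemma inter_iff (ca cb : Bool) (p q : ℝ) :
    (UInt' ca p ∩ UInt' cb q).Nonempty ↔ ECond ca cb p q := by
  have hwit : p < q + 1 → q < p + 1 →
      ∃ z : ℝ, (p < z ∧ z < p + 1) ∧ (q < z ∧ z < q + 1) := by
    intro h1 h2
    refine ⟨(max p q + min (p + 1) (q + 1)) / 2, ?_⟩
    have hm : max p q < min (p + 1) (q + 1) :=
      max_lt (lt_min (by linarith) h1) (lt_min h2 (by linarith))
    have l1 := le_max_left p q
    have l2 := le_max_right p q
    have l3 := min_le_left (p + 1) (q + 1)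
    have l4 := min_le_right (p + 1) (q + 1)
    constructor <;> constructor <;> linarith
  cases ca <;> cases cb <;>
    simp only [UInt', cond_true, cond_false, ECond] <;> constructor
  · rintro ⟨z, hz1, hz2⟩
    simp only [Set.mem_Ioo] at hz1 hz2
    refine ⟨by linarith [hz1.1, hz2.2], by linarith [hz2.1, hz1.2], fun heq => ?_⟩
    rcases heq with h1 | h1 <;> exfalso <;> [linarith [hz1.1, hz2.2]; linarith [hz2.1, hz1.2]]
  · rintro ⟨h1, h2, h3⟩
    have s1 : p < q + 1 := lt_of_le_of_ne h1 (fun hh => Bool.false_ne_true (h3 (Or.inl hh)).1)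
    have s2 : q < p + 1 := lt_of_le_of_ne h2 (fun hh => Bool.false_ne_true (h3 (Or.inr hh)).1)
    obtain ⟨z, hz1, hz2⟩ := hwit s1 s2
    exact ⟨z, Set.mem_Ioo.2 hz1, Set.mem_Ioo.2 hz2⟩
  · rintro ⟨z, hz1, hz2⟩
    simp only [Set.mem_Ioo, Set.mem_Icc] at hz1 hz2
    refine ⟨by linarith [hz1.1, hz2.2], by linarith [hz2.1, hz1.2], fun heq => ?_⟩
    rcases heq with h1 | h1 <;> exfalso <;> [linarith [hz1.1, hz2.2]; linarith [hz2.1, hz1.2]]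
  · rintro ⟨h1, h2, h3⟩
    have s1 : p < q + 1 := lt_of_le_of_ne h1 (fun hh => Bool.false_ne_true (h3 (Or.inl hh)).1)
    have s2 : q < p + 1 := lt_of_le_of_ne h2 (fun hh => Bool.false_ne_true (h3 (Or.inr hh)).1)
    obtain ⟨z, hz1, hz2⟩ := hwit s1 s2
    exact ⟨z, Set.mem_Ioo.2 hz1, Set.Ioo_subset_Icc_self (Set.mem_Ioo.2 hz2)⟩
  · rintro ⟨z, hz1, hz2⟩
    simp only [Set.mem_Ioo, Set.mem_Icc] at hz1 hz2
    refine ⟨by linarith [hz1.1, hz2.2], by linarith [hz2.1, hz1.2], fun heq => ?_⟩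
    rcases heq with h1 | h1 <;> exfalso <;> [linarith [hz1.1, hz2.2]; linarith [hz2.1, hz1.2]]
  · rintro ⟨h1, h2, h3⟩
    have s1 : p < q + 1 := lt_of_le_of_ne h1 (fun hh => Bool.false_ne_true (h3 (Or.inl hh)).2)
    have s2 : q < p + 1 := lt_of_le_of_ne h2 (fun hh => Bool.false_ne_true (h3 (Or.inr hh)).2)
    obtain ⟨z, hz1, hz2⟩ := hwit s1 s2
    exact ⟨z, Set.Ioo_subset_Icc_self (Set.mem_Ioo.2 hz1), Set.mem_Ioo.2 hz2⟩
  · rintro ⟨z, hz1, hz2⟩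
    simp only [Set.mem_Icc] at hz1 hz2
    exact ⟨by linarith [hz1.1, hz2.2], by linarith [hz2.1, hz1.2], fun _ => by simp⟩
  · rintro ⟨h1, h2, _⟩
    refine ⟨max p q, Set.mem_Icc.2 ⟨le_max_left _ _, max_le (by linarith) (by linarith)⟩,
      Set.mem_Icc.2 ⟨le_max_right _ _, max_le (by linarith) (by linarith)⟩⟩

lemma key_s6 (p : Fin 5 ⊕ Fin 5 → ℝ) (c : Fin 5 ⊕ Fin 5 → Bool)
    (h : ∀ x y, F6E x y ↔ ECond (c (Sum.inl x)) (c (Sum.inr y)) (p (Sum.inl x)) (p (Sum.inr y)))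
    (hw : p (Sum.inr 2) ≤ p (Sum.inr 1)) : False := by
  have hne : ∀ x y, ¬ F6E x y → NCond (c (Sum.inl x)) (c (Sum.inr y)) (p (Sum.inl x)) (p (Sum.inr y)) :=
    fun x y hxy => NCond_of_not (fun hC => hxy ((h x y).2 hC))
  obtain ⟨e11l, e11r, e11q⟩ := (h 0 0).1 (by unfold F6E; decide)
  obtain ⟨e21l, e21r, e21q⟩ := (h 1 0).1 (by unfold F6E; decide)
  obtain ⟨e22l, e22r, e22q⟩ := (h 1 1).1 (by unfold F6E; decide)
  obtain ⟨e25l, e25r, e25q⟩ := (h 1 4).1 (by unfold F6E; decide)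
  obtain ⟨e31l, e31r, e31q⟩ := (h 2 0).1 (by unfold F6E; decide)
  obtain ⟨e33l, e33r, e33q⟩ := (h 2 2).1 (by unfold F6E; decide)
  obtain ⟨e34l, e34r, e34q⟩ := (h 2 3).1 (by unfold F6E; decide)
  obtain ⟨e42l, e42r, e42q⟩ := (h 3 1).1 (by unfold F6E; decide)
  obtain ⟨e43l, e43r, e43q⟩ := (h 3 2).1 (by unfold F6E; decide)
  obtain ⟨e45l, e45r, e45q⟩ := (h 3 4).1 (by unfold F6E; decide)
  obtain ⟨e55l, e55r, e55q⟩ := (h 4 4).1 (by unfold F6E; decide)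
  obtain ⟨n12w, n12q⟩ := hne 0 1 (by unfold F6E; decide)
  obtain ⟨n13w, n13q⟩ := hne 0 2 (by unfold F6E; decide)
  obtain ⟨n14w, n14q⟩ := hne 0 3 (by unfold F6E; decide)
  obtain ⟨n15w, n15q⟩ := hne 0 4 (by unfold F6E; decide)
  obtain ⟨n23w, n23q⟩ := hne 1 2 (by unfold F6E; decide)
  obtain ⟨n32w, n32q⟩ := hne 2 1 (by unfold F6E; decide)
  obtain ⟨n35w, n35q⟩ := hne 2 4 (by unfold F6E; decide)
  obtain ⟨n44w, n44q⟩ := hne 3 3 (by unfold F6E; decide)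
  obtain ⟨n51w, n51q⟩ := hne 4 0 (by unfold F6E; decide)
  obtain ⟨n52w, n52q⟩ := hne 4 1 (by unfold F6E; decide)
  obtain ⟨n53w, n53q⟩ := hne 4 2 (by unfold F6E; decide)
  set x1 := p (Sum.inl 0) with hdx1
  set x2 := p (Sum.inl 1) with hdx2
  set x3 := p (Sum.inl 2) with hdx3
  set x4 := p (Sum.inl 3) with hdx4
  set x5 := p (Sum.inl 4) with hdx5
  set y1 := p (Sum.inr 0) with hdy1
  set y2 := p (Sum.inr 1) with hdy2
  set y3 := p (Sum.inr 2) with hdy3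
  set y4 := p (Sum.inr 3) with hdy4
  set y5 := p (Sum.inr 4) with hdy5
  -- Claim 1 : y3 + 1 ≤ x2
  have C1 : y3 + 1 ≤ x2 := by
    rcases n23w with hcase | hcase
    · exact hcase
    · have h1 : y2 = x2 + 1 := by linarith
      have h2 : y3 = x2 + 1 := by linarith
      obtain ⟨hc2, hd2⟩ := e22q (Or.inr h1)
      have hd3 : ¬ (c (Sum.inr 2) = true) := fun hd => n23q (Or.inr h2) ⟨hc2, hd⟩
      have s1 : x3 < y3 + 1 := lt_of_le_of_ne e33l (fun hh => hd3 (e33q (Or.inl hh)).2)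
      have s2 : y3 < x3 + 1 := lt_of_le_of_ne e33r (fun hh => hd3 (e33q (Or.inr hh)).2)
      rcases n32w with hh | hh <;> linarith
  -- Claim 2 : x3 + 1 ≤ y2
  have C2 : x3 + 1 ≤ y2 := by
    rcases n32w with hcase | hcase
    · have h1 : x3 = y3 + 1 := by linarith
      have h2 : x3 = y2 + 1 := by linarith
      obtain ⟨hc3, hd3⟩ := e33q (Or.inl h1)
      have hd2 : ¬ (c (Sum.inr 1) = true) := fun hd => n32q (Or.inl h2) ⟨hc3, hd⟩
      have s1 : x2 < y2 + 1 := lt_of_le_of_ne e22l (fun hh => hd2 (e22q (Or.inl hh)).2)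
      have s2 : y2 < x2 + 1 := lt_of_le_of_ne e22r (fun hh => hd2 (e22q (Or.inr hh)).2)
      rcases n23w with hh | hh <;> linarith
    · exact hcase
  have F1 : y2 ≤ x4 + 1 := e42r
  have F2 : x4 ≤ y3 + 1 := e43l
  have G1 : y3 ≤ y1 := by linarith [e21l]
  have G2 : y1 ≤ y2 := by linarith [e31r]
  rcases n13w with hB | hA
  · -- Case B : y3 + 1 ≤ x1
    rcases n12w with hB1 | hB2
    · -- B1 : y2 + 1 ≤ x1
      have h1 : x1 = y1 + 1 := by linarith [e11l]
      have h2 : x1 = y2 + 1 := by linarith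
      have h3 : y1 = y2 := by linarith
      obtain ⟨hc1, hd1⟩ := e11q (Or.inl h1)
      have hd2 : ¬ (c (Sum.inr 1) = true) := fun hd => n12q (Or.inl h2) ⟨hc1, hd⟩
      have h4 : x3 + 1 = y2 := by linarith [e31r]
      rcases n35w with h5 | h5
      · -- B1a : y5 + 1 ≤ x3
        have h6 : x2 = y3 + 1 := by linarith [e25l]
        have h7 : y2 = x2 + 1 := by linarith [e25l]
        have h8 : x4 = y3 + 1 := by linarith
        obtain ⟨hc4, hd3⟩ := e43q (Or.inl h8)
        have hc2 : ¬ (c (Sum.inl 1) = true) := fun hc => n23q (Or.inl h6) ⟨hc, hd3⟩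
        exact hc2 (e22q (Or.inr h7)).1
      · -- B1b : x3 + 1 ≤ y5
        rcases n52w with h6 | h6
        · -- x5 ≥ y2 + 1
          rcases n15w with h7 | h7
          · -- β : y5 + 1 ≤ x1, so y5 = y2 and x5 = y5 + 1
            have h8 : x5 = y5 + 1 := by linarith [e55l]
            have h9 : x5 = y1 + 1 := by linarith
            obtain ⟨hc5, hd5⟩ := e55q (Or.inl h8)
            exact n51q (Or.inl h9) ⟨hc5, hd1⟩
          · -- α : x1 + 1 ≤ y5
            have h8 : x4 = y2 + 1 := by linarith [e45r]
            exact hd2 (e42q (Or.inl h8)).2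
        · -- B1b-i : x5 + 1 ≤ y2
          have h7 : y5 = x5 + 1 := by linarith [e55r]
          have h8 : y1 = x5 + 1 := by linarith
          obtain ⟨hc5, hd5⟩ := e55q (Or.inr h7)
          exact n51q (Or.inr h8) ⟨hc5, hd1⟩
    · -- B2 : x1 + 1 ≤ y2
      have h1 : y2 = x4 + 1 := by linarith
      have h2 : x4 = y3 + 1 := by linarith
      have h3 : x1 = y3 + 1 := by linarith
      have h4 : y2 = x1 + 1 := by linarith
      obtain ⟨hc4, hd2⟩ := e42q (Or.inr h1)
      obtain ⟨hc4', hd3⟩ := e43q (Or.inl h2)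
      have hc1 : ¬ (c (Sum.inl 0) = true) := fun hc => n12q (Or.inr h4) ⟨hc, hd2⟩
      have s1 : x1 < y1 + 1 := lt_of_le_of_ne e11l (fun hh => hc1 (e11q (Or.inl hh)).1)
      have s2 : y1 < x1 + 1 := lt_of_le_of_ne e11r (fun hh => hc1 (e11q (Or.inr hh)).1)
      rcases n53w with h5 | h5
      · -- y3 + 1 ≤ x5
        rcases n52w with h6 | h6
        · -- y2 + 1 ≤ x5
          have h7 : x5 = y5 + 1 := by linarith [e55l, e45r]
          have h8 : x5 = y2 + 1 := by linarith [e45r]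
          obtain ⟨hc5, hd5⟩ := e55q (Or.inl h7)
          exact n52q (Or.inl h8) ⟨hc5, hd2⟩
        · -- x5 + 1 ≤ y2 : then x5 = y3 + 1 = x1
          rcases n51w with h7 | h7 <;> linarith
      · -- x5 + 1 ≤ y3
        have h6 : y5 = x5 + 1 := by linarith [e55r, e25l]
        have h7 : y3 = x5 + 1 := by linarith [e25l]
        obtain ⟨hc5, hd5⟩ := e55q (Or.inr h6)
        exact n53q (Or.inr h7) ⟨hc5, hd3⟩
  · -- Case A : x1 + 1 ≤ y3
    have hA1 : y1 = x1 + 1 := by linarith [e11r]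
    have hA2 : y3 = x1 + 1 := by linarith
    obtain ⟨hc1, hd1⟩ := e11q (Or.inr hA1)
    have hd3 : ¬ (c (Sum.inr 2) = true) := fun hd => n13q (Or.inr hA2) ⟨hc1, hd⟩
    rcases n14w with h4 | h4
    · -- A1 : y4 + 1 ≤ x1
      have hx3 : y3 = x3 + 1 := by linarith [e34l, e33r]
      exact hd3 (e33q (Or.inr hx3)).2
    · -- A2 : x1 + 1 ≤ y4
      rcases n44w with h44 | h44
      · -- y4 + 1 ≤ x4
        have hx4 : x4 = y3 + 1 := by linarith
        exact hd3 (e43q (Or.inl hx4)).2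
      · -- x4 + 1 ≤ y4
        have h5 : y4 = x3 + 1 := by linarith [e34r]
        have h6 : y4 = x4 + 1 := by linarith [e34r]
        have h7 : y2 = x4 + 1 := by linarith [e34r]
        obtain ⟨hc3, hd4⟩ := e34q (Or.inr h5)
        have hc4 : ¬ (c (Sum.inl 3) = true) := fun hcc => n44q (Or.inr h6) ⟨hcc, hd4⟩
        exact hc4 (e42q (Or.inr h7)).1

def F6f : Fin 5 ⊕ Fin 5 → Set ℝ
  | .inl 0 => Set.Ioo 0 1
  | .inl 1 => Set.Icc (1/2) (3/2)
  | .inl 2 => Set.Icc (-(1/2)) (1/2)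
  | .inl 3 => Set.Icc 0 1
  | .inl 4 => Set.Icc 2 3
  | .inr 0 => Set.Icc 0 1
  | .inr 1 => Set.Ico 1 2
  | .inr 2 => Set.Icc (-1) 0
  | .inr 3 => Set.Icc (-(3/2)) (-(1/2))
  | .inr 4 => Set.Icc 1 2

lemma F6f_mem : ∀ v, F6f v ∈ UnitFam := by
  rintro (v | v) <;> fin_cases v <;> simp only [F6f]
  · have h : (Set.Ioo 0 1 : Set ℝ) = Set.Ioo (0 : ℝ) ((0 : ℝ) + 1) := by norm_num
    rw [h]
    exact Or.inl (Or.inl (Or.inr ⟨(0 : ℝ), rfl⟩))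
  · have h : (Set.Icc (1/2) (3/2) : Set ℝ) = Set.Icc (1/2 : ℝ) ((1/2 : ℝ) + 1) := by norm_num
    rw [h]
    exact Or.inl (Or.inl (Or.inl ⟨(1/2 : ℝ), rfl⟩))
  · have h : (Set.Icc (-(1/2)) (1/2) : Set ℝ) = Set.Icc (-(1/2) : ℝ) ((-(1/2) : ℝ) + 1) := by norm_num
    rw [h]
    exact Or.inl (Or.inl (Or.inl ⟨(-(1/2) : ℝ), rfl⟩))
  · have h : (Set.Icc 0 1 : Set ℝ) = Set.Icc (0 : ℝ) ((0 : ℝ) + 1) := by norm_num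
    rw [h]
    exact Or.inl (Or.inl (Or.inl ⟨(0 : ℝ), rfl⟩))
  · have h : (Set.Icc 2 3 : Set ℝ) = Set.Icc (2 : ℝ) ((2 : ℝ) + 1) := by norm_num
    rw [h]
    exact Or.inl (Or.inl (Or.inl ⟨(2 : ℝ), rfl⟩))
  · have h : (Set.Icc 0 1 : Set ℝ) = Set.Icc (0 : ℝ) ((0 : ℝ) + 1) := by norm_num
    rw [h]
    exact Or.inl (Or.inl (Or.inl ⟨(0 : ℝ), rfl⟩))
  · have h : (Set.Ico 1 2 : Set ℝ) = Set.Ico (1 : ℝ) ((1 : ℝ) + 1) := by norm_num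
    rw [h]
    exact Or.inl (Or.inr ⟨(1 : ℝ), rfl⟩)
  · have h : (Set.Icc (-1) 0 : Set ℝ) = Set.Icc (-1 : ℝ) ((-1 : ℝ) + 1) := by norm_num
    rw [h]
    exact Or.inl (Or.inl (Or.inl ⟨(-1 : ℝ), rfl⟩))
  · have h : (Set.Icc (-(3/2)) (-(1/2)) : Set ℝ) = Set.Icc (-(3/2) : ℝ) ((-(3/2) : ℝ) + 1) := by norm_num
    rw [h]
    exact Or.inl (Or.inl (Or.inl ⟨(-(3/2) : ℝ), rfl⟩))
  · have h : (Set.Icc 1 2 : Set ℝ) = Set.Icc (1 : ℝ) ((1 : ℝ) + 1) := by norm_num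
    rw [h]
    exact Or.inl (Or.inl (Or.inl ⟨(1 : ℝ), rfl⟩))

lemma part1 : IsMBigraph UnitFam F6E := by
  refine ⟨F6f, F6f_mem, ?_⟩
  intro x y
  fin_cases x <;> fin_cases y <;> simp only [F6f]
  · exact ⟨fun _ => ⟨(1/2 : ℝ), by norm_num, by norm_num⟩, fun _ => by unfold F6E; decide⟩
  · constructor
    · intro h; exfalso; revert h; unfold F6E; decide
    · rintro ⟨z, hz1, hz2⟩
      exfalso
      simp only [Set.mem_Icc, Set.mem_Ioo, Set.mem_Ico] at hz1 hz2
      norm_num at hz1 hz2 <;> linarith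
  · constructor
    · intro h; exfalso; revert h; unfold F6E; decide
    · rintro ⟨z, hz1, hz2⟩
      exfalso
      simp only [Set.mem_Icc, Set.mem_Ioo, Set.mem_Ico] at hz1 hz2
      norm_num at hz1 hz2 <;> linarith
  · constructor
    · intro h; exfalso; revert h; unfold F6E; decide
    · rintro ⟨z, hz1, hz2⟩
      exfalso
      simp only [Set.mem_Icc, Set.mem_Ioo, Set.mem_Ico] at hz1 hz2
      norm_num at hz1 hz2 <;> linarith
  · constructor
    · intro h; exfalso; revert h; unfold F6E; decide
    · rintro ⟨z, hz1, hz2⟩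
      exfalso
      simp only [Set.mem_Icc, Set.mem_Ioo, Set.mem_Ico] at hz1 hz2
      norm_num at hz1 hz2 <;> linarith
  · exact ⟨fun _ => ⟨(3/4 : ℝ), by norm_num, by norm_num⟩, fun _ => by unfold F6E; decide⟩
  · exact ⟨fun _ => ⟨(5/4 : ℝ), by norm_num, by norm_num⟩, fun _ => by unfold F6E; decide⟩
  · constructor
    · intro h; exfalso; revert h; unfold F6E; decide
    · rintro ⟨z, hz1, hz2⟩
      exfalso
      simp only [Set.mem_Icc, Set.mem_Ioo, Set.mem_Ico] at hz1 hz2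
      norm_num at hz1 hz2 <;> linarith
  · constructor
    · intro h; exfalso; revert h; unfold F6E; decide
    · rintro ⟨z, hz1, hz2⟩
      exfalso
      simp only [Set.mem_Icc, Set.mem_Ioo, Set.mem_Ico] at hz1 hz2
      norm_num at hz1 hz2 <;> linarith
  · exact ⟨fun _ => ⟨(5/4 : ℝ), by norm_num, by norm_num⟩, fun _ => by unfold F6E; decide⟩
  · exact ⟨fun _ => ⟨(1/4 : ℝ), by norm_num, by norm_num⟩, fun _ => by unfold F6E; decide⟩
  · constructor
    · intro h; exfalso; revert h; unfold F6E; decide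
    · rintro ⟨z, hz1, hz2⟩
      exfalso
      simp only [Set.mem_Icc, Set.mem_Ioo, Set.mem_Ico] at hz1 hz2
      norm_num at hz1 hz2 <;> linarith
  · exact ⟨fun _ => ⟨(-(1/4) : ℝ), by norm_num, by norm_num⟩, fun _ => by unfold F6E; decide⟩
  · exact ⟨fun _ => ⟨(-(1/2) : ℝ), by norm_num, by norm_num⟩, fun _ => by unfold F6E; decide⟩
  · constructor
    · intro h; exfalso; revert h; unfold F6E; decide
    · rintro ⟨z, hz1, hz2⟩
      exfalso
      simp only [Set.mem_Icc, Set.mem_Ioo, Set.mem_Ico] at hz1 hz2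
      norm_num at hz1 hz2 <;> linarith
  · exact ⟨fun _ => ⟨(1/2 : ℝ), by norm_num, by norm_num⟩, fun _ => by unfold F6E; decide⟩
  · exact ⟨fun _ => ⟨(1 : ℝ), by norm_num, by norm_num⟩, fun _ => by unfold F6E; decide⟩
  · exact ⟨fun _ => ⟨(0 : ℝ), by norm_num, by norm_num⟩, fun _ => by unfold F6E; decide⟩
  · constructor
    · intro h; exfalso; revert h; unfold F6E; decide
    · rintro ⟨z, hz1, hz2⟩
      exfalso
      simp only [Set.mem_Icc, Set.mem_Ioo, Set.mem_Ico] at hz1 hz2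
      norm_num at hz1 hz2 <;> linarith
  · exact ⟨fun _ => ⟨(1 : ℝ), by norm_num, by norm_num⟩, fun _ => by unfold F6E; decide⟩
  · constructor
    · intro h; exfalso; revert h; unfold F6E; decide
    · rintro ⟨z, hz1, hz2⟩
      exfalso
      simp only [Set.mem_Icc, Set.mem_Ioo, Set.mem_Ico] at hz1 hz2
      norm_num at hz1 hz2 <;> linarith
  · constructor
    · intro h; exfalso; revert h; unfold F6E; decide
    · rintro ⟨z, hz1, hz2⟩
      exfalso
      simp only [Set.mem_Icc, Set.mem_Ioo, Set.mem_Ico] at hz1 hz2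
      norm_num at hz1 hz2 <;> linarith
  · constructor
    · intro h; exfalso; revert h; unfold F6E; decide
    · rintro ⟨z, hz1, hz2⟩
      exfalso
      simp only [Set.mem_Icc, Set.mem_Ioo, Set.mem_Ico] at hz1 hz2
      norm_num at hz1 hz2 <;> linarith
  · constructor
    · intro h; exfalso; revert h; unfold F6E; decide
    · rintro ⟨z, hz1, hz2⟩
      exfalso
      simp only [Set.mem_Icc, Set.mem_Ioo, Set.mem_Ico] at hz1 hz2
      norm_num at hz1 hz2 <;> linarith
  · exact ⟨fun _ => ⟨(2 : ℝ), by norm_num, by norm_num⟩, fun _ => by unfold F6E; decide⟩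


/-- `F₆` is a mixed unit interval bigraph but not a `𝓤^±`-bigraph; consequently the
class of mixed unit interval bigraphs properly contains the class of `𝓤^±`-bigraphs. -/
theorem F6_mixedUnit_not_UPM :
    IsMBigraph UnitFam F6E ∧ ¬ IsMBigraph (UnitCC ∪ UnitOO) F6E ∧
      (∀ (X Y : Type) [Fintype X] [Fintype Y] (E : X → Y → Prop),
        IsMBigraph (UnitCC ∪ UnitOO) E → IsMBigraph UnitFam E) := by
  refine ⟨part1, ?_, ?_⟩
  · rintro ⟨f, hmem, hiff⟩
    have hpc : ∀ v, ∃ pc : ℝ × Bool, f v = UInt' pc.2 pc.1 := by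
      intro v
      rcases hmem v with ⟨a, ha⟩ | ⟨a, ha⟩
      · exact ⟨(a, true), ha⟩
      · exact ⟨(a, false), ha⟩
    choose pc hpc using hpc
    have h : ∀ x y, F6E x y ↔
        ECond ((pc (Sum.inl x)).2) ((pc (Sum.inr y)).2) ((pc (Sum.inl x)).1) ((pc (Sum.inr y)).1) := by
      intro x y
      rw [hiff x y, hpc (Sum.inl x), hpc (Sum.inr y), inter_iff]
    rcases le_total ((pc (Sum.inr 2)).1) ((pc (Sum.inr 1)).1) with hwl | hwl
    · exact key_s6 (fun v => (pc v).1) (fun v => (pc v).2) h hwl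
    · refine key_s6 (fun v => -((pc v).1)) (fun v => (pc v).2) ?_ (by simpa using hwl)
      intro x y
      refine (h x y).trans ⟨fun hh => ECond_neg hh, fun hh => ?_⟩
      have := ECond_neg hh
      simpa using this
  · rintro X Y _ _ E ⟨f, hmem, hiff⟩
    exact ⟨f, fun v => Or.inl (Or.inl (hmem v)), hiff⟩
end

section
/- The bigraph B₁ is not a 𝓤-bigraph; that is, B₁ admits no intersection representation by unit intervals of the four types (closed, open, closed-open, open-closed). -/
/-- The bigraph `B₁`, the spider with four legs of length two:
`X = {c, x₁, x₂, x₃, x₄}` (index `0` is the center `c`, index `i` is `xᵢ`),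
`Y = {y₁, y₂, y₃, y₄}` (index `i-1` is `yᵢ`), edges `cyᵢ` and `yᵢxᵢ`. -/
def B1E : Fin 5 → Fin 4 → Prop := fun x y => x.val = 0 ∨ x.val = y.val + 1

lemma unit_struct {s : Set ℝ} (hs : s ∈ UnitFam) :
    ∃ a : ℝ, Set.Ioo a (a + 1) ⊆ s ∧ s ⊆ Set.Icc a (a + 1) := by
  rcases hs with ((h | h) | h) | h <;> obtain ⟨a, rfl⟩ := h
  · exact ⟨a, Set.Ioo_subset_Icc_self, subset_rfl⟩
  · exact ⟨a, subset_rfl, Set.Ioo_subset_Icc_self⟩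
  · exact ⟨a, Set.Ioo_subset_Ico_self, Set.Ico_subset_Icc_self⟩
  · exact ⟨a, Set.Ioo_subset_Ioc_self, Set.Ioc_subset_Icc_self⟩

lemma meet_le {I J : Set ℝ} {a b : ℝ} (hI : I ⊆ Set.Icc a (a + 1)) (hJ : J ⊆ Set.Icc b (b + 1))
    (h : (I ∩ J).Nonempty) : b ≤ a + 1 ∧ a ≤ b + 1 := by
  obtain ⟨t, htI, htJ⟩ := h
  obtain ⟨h1, h2⟩ := hI htI
  obtain ⟨h3, h4⟩ := hJ htJ
  exact ⟨by linarith, by linarith⟩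

lemma meet_of_close {I J : Set ℝ} {a b : ℝ} (hI : Set.Ioo a (a + 1) ⊆ I)
    (hJ : Set.Ioo b (b + 1) ⊆ J) (h1 : a < b + 1) (h2 : b < a + 1) : (I ∩ J).Nonempty :=
  ⟨(a + b + 1) / 2, hI ⟨by linarith, by linarith⟩, hJ ⟨by linarith, by linarith⟩⟩

lemma miss_far {I J : Set ℝ} {a b : ℝ} (hI : Set.Ioo a (a + 1) ⊆ I)
    (hJ : Set.Ioo b (b + 1) ⊆ J) (hm : ¬ (I ∩ J).Nonempty) : b + 1 ≤ a ∨ a + 1 ≤ b := by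
  by_contra hc
  push_neg at hc
  exact hm (meet_of_close hI hJ (by linarith [hc.1]) (by linarith [hc.2]))

lemma meet_boundary {I J : Set ℝ} {a b : ℝ} (hI : I ⊆ Set.Icc a (a + 1))
    (hJ : J ⊆ Set.Icc b (b + 1)) (hb : b = a + 1) (h : (I ∩ J).Nonempty) :
    (a + 1) ∈ I ∧ (a + 1) ∈ J := by
  obtain ⟨t, htI, htJ⟩ := h
  obtain ⟨h1, h2⟩ := hI htI
  obtain ⟨h3, h4⟩ := hJ htJ
  have ht : t = a + 1 := by rw [hb] at h3; linarith
  rw [ht] at htI htJ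
  exact ⟨htI, htJ⟩

lemma nonempty_comm' {S T : Set ℝ} (h : (S ∩ T).Nonempty) : (T ∩ S).Nonempty := by
  obtain ⟨t, h1, h2⟩ := h; exact ⟨t, h2, h1⟩

lemma core (C : Set ℝ) (Yt Xt : Fin 4 → Set ℝ) (A : ℝ) (u p : Fin 4 → ℝ)
    (hC2 : C ⊆ Set.Icc A (A + 1))
    (hY1 : ∀ j, Set.Ioo (u j) (u j + 1) ⊆ Yt j) (hY2 : ∀ j, Yt j ⊆ Set.Icc (u j) (u j + 1))
    (hX1 : ∀ j, Set.Ioo (p j) (p j + 1) ⊆ Xt j) (hX2 : ∀ j, Xt j ⊆ Set.Icc (p j) (p j + 1))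
    (hcy : ∀ j, (C ∩ Yt j).Nonempty)
    (hxy : ∀ j, (Xt j ∩ Yt j).Nonempty)
    (hmiss : ∀ j k, j ≠ k → ¬ (Xt j ∩ Yt k).Nonempty) : False := by
  have hwin : ∀ j, A - 1 ≤ u j ∧ u j ≤ A + 1 := by
    intro j
    have h := meet_le hC2 (hY2 j) (hcy j)
    exact ⟨by linarith [h.2], by linarith [h.1]⟩
  obtain ⟨ia, ib, m1, m2, hne, h1a, h1b, h2a, h2b, hle1, hle2, hle3, hle4⟩ :
      ∃ ia ib m1 m2 : Fin 4, m1 ≠ m2 ∧ m1 ≠ ia ∧ m1 ≠ ib ∧ m2 ≠ ia ∧ m2 ≠ ib ∧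
        u ia ≤ u m1 ∧ u ia ≤ u m2 ∧ u m1 ≤ u ib ∧ u m2 ≤ u ib := by
    obtain ⟨ia, -, hia⟩ := Finset.exists_min_image Finset.univ u ⟨0, Finset.mem_univ 0⟩
    obtain ⟨ib, -, hib⟩ := Finset.exists_max_image Finset.univ u ⟨0, Finset.mem_univ 0⟩
    have hmin : ∀ j, u ia ≤ u j := fun j => hia j (Finset.mem_univ j)
    have hmax : ∀ j, u j ≤ u ib := fun j => hib j (Finset.mem_univ j)
    by_cases hab : ia = ib
    · subst hab
      exact ⟨0, 1, 2, 3, by decide, by decide, by decide, by decide, by decide,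
        (hmax 0).trans (hmin 2), (hmax 0).trans (hmin 3),
        (hmax 2).trans (hmin 1), (hmax 3).trans (hmin 1)⟩
    · obtain ⟨n1, n2, hc⟩ := (by decide :
        ∀ a b : Fin 4, a ≠ b → ∃ m1 m2 : Fin 4, m1 ≠ m2 ∧ m1 ≠ a ∧ m1 ≠ b ∧ m2 ≠ a ∧ m2 ≠ b) ia ib hab
      exact ⟨ia, ib, n1, n2, hc.1, hc.2.1, hc.2.2.1, hc.2.2.2.1, hc.2.2.2.2,
        hmin n1, hmin n2, hmax n1, hmax n2⟩
  have huab : u ia ≤ u ib := hle1.trans hle3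
  have mid : ∀ m : Fin 4, m ≠ ia → m ≠ ib → u ia ≤ u m → u m ≤ u ib →
      (u m = u ia ∧ p m + 1 = u ia ∧ u ia ∈ Xt m ∧ u ia ∈ Yt m ∧ u ia ∉ Yt ia) ∨
      (u m = u ib ∧ p m = u ib + 1 ∧ p m ∈ Xt m ∧ p m ∈ Yt m ∧ p m ∉ Yt ib) ∨
      (u ia = A - 1 ∧ u ib = A + 1 ∧ p m = A ∧ A - 1 < u m ∧ u m < A + 1) := by
    intro m hma hmb hua hub
    obtain ⟨hml, hmr⟩ := meet_le (hX2 m) (hY2 m) (hxy m)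
    rcases miss_far (hX1 m) (hY1 ia) (hmiss m ia hma) with hfa | hfa
    · -- u ia + 1 ≤ p m
      rcases miss_far (hX1 m) (hY1 ib) (hmiss m ib hmb) with hfb | hfb
      · -- u ib + 1 ≤ p m : outcome (ii)
        have hpm : p m = u ib + 1 := le_antisymm (by linarith) hfb
        have hum : u m = u ib := by linarith
        have hbd := meet_boundary (hY2 m) (hX2 m) (by linarith : p m = u m + 1)
          (nonempty_comm' (hxy m))
        have hxm : p m ∈ Xt m := by rw [show p m = u m + 1 by linarith]; exact hbd.2
        have hym : p m ∈ Yt m := by rw [show p m = u m + 1 by linarith]; exact hbd.1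
        exact Or.inr (Or.inl ⟨hum, hpm, hxm, hym, fun hy => hmiss m ib hmb ⟨p m, hxm, hy⟩⟩)
      · -- p m + 1 ≤ u ib : outcome (iii)
        have hiA : u ia = A - 1 := by linarith [(hwin ia).1, (hwin ib).2]
        have hiB : u ib = A + 1 := by linarith [(hwin ia).1, (hwin ib).2]
        have hpm : p m = A := by linarith
        have hbd1 := meet_boundary (hY2 ia) hC2 (by linarith : A = u ia + 1)
          (nonempty_comm' (hcy ia))
        have hbd2 := meet_boundary hC2 (hY2 ib) hiB (hcy ib)
        have hnx1 : A ∉ Xt m := fun hx => hmiss m ia hma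
          ⟨A, hx, by rw [show A = u ia + 1 by linarith]; exact hbd1.1⟩
        have hnx2 : A + 1 ∉ Xt m := fun hx => hmiss m ib hmb ⟨A + 1, hx, hbd2.2⟩
        obtain ⟨t, htx, hty⟩ := hxy m
        obtain ⟨ht1, ht2⟩ := hX2 m htx
        obtain ⟨ht3, ht4⟩ := hY2 m hty
        have htA : A < t := lt_of_le_of_ne (by linarith) (fun h => hnx1 (by rw [h]; exact htx))
        have htA2 : t < A + 1 := lt_of_le_of_ne (by linarith)
          (fun h => hnx2 (by rw [← h]; exact htx))
        exact Or.inr (Or.inr ⟨hiA, hiB, hpm, by linarith, by linarith⟩)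
    · -- p m + 1 ≤ u ia : outcome (i)
      have hum : u m = u ia := le_antisymm (by linarith) hua
      have hpm : p m + 1 = u ia := le_antisymm hfa (by linarith)
      have hbd := meet_boundary (hX2 m) (hY2 m) (by linarith : u m = p m + 1) (hxy m)
      have hxm : u ia ∈ Xt m := by rw [← hpm]; exact hbd.1
      have hym : u ia ∈ Yt m := by rw [← hpm]; exact hbd.2
      exact Or.inl ⟨hum, hpm, hxm, hym, fun hy => hmiss m ia hma ⟨u ia, hxm, hy⟩⟩
  have K12 : ∀ mA mB : Fin 4, mA ≠ ia → mB ≠ ia →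
      (u mA = u ia ∧ p mA + 1 = u ia ∧ u ia ∈ Xt mA ∧ u ia ∈ Yt mA ∧ u ia ∉ Yt ia) →
      (u mB = u ib ∧ p mB = u ib + 1 ∧ p mB ∈ Xt mB ∧ p mB ∈ Yt mB ∧ p mB ∉ Yt ib) →
      False := by
    intro mA mB hAa hBa hOA hOB
    obtain ⟨e1, e2, hxA, hyA, hnA⟩ := hOA
    obtain ⟨f1, f2, hxB, hyB, hnB⟩ := hOB
    obtain ⟨g1, g2⟩ := meet_le (hX2 ia) (hY2 ia) (hxy ia)
    rcases miss_far (hX1 ia) (hY1 mA) (hmiss ia mA (Ne.symm hAa)) with hf | hf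
    · -- u mA + 1 ≤ p ia
      have hpa : p ia = u ia + 1 := le_antisymm g2 (by linarith)
      have hbd := meet_boundary (hY2 ia) (hX2 ia) hpa (nonempty_comm' (hxy ia))
      rcases miss_far (hX1 ia) (hY1 mB) (hmiss ia mB (Ne.symm hBa)) with hg | hg
      · -- u mB + 1 ≤ p ia, so u ib = u ia
        have heq : u ib = u ia := le_antisymm (by linarith) huab
        exact hmiss ia mB (Ne.symm hBa)
          ⟨u ia + 1, hbd.2, by rw [show u ia + 1 = p mB by linarith]; exact hyB⟩
      · -- p ia + 1 ≤ u mB, so u ib ≥ u ia + 2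
        have hiA : u ia = A - 1 := by linarith [(hwin ia).1, (hwin ib).2]
        have hbm := meet_boundary (hY2 mA) hC2 (by linarith : A = u mA + 1)
          (nonempty_comm' (hcy mA))
        exact hmiss ia mA (Ne.symm hAa)
          ⟨u ia + 1, hbd.2, by rw [show u ia + 1 = u mA + 1 by linarith]; exact hbm.1⟩
    · -- p ia + 1 ≤ u mA = u ia
      have hpa : u ia = p ia + 1 := le_antisymm g1 (by linarith)
      have hbd := meet_boundary (hX2 ia) (hY2 ia) hpa (hxy ia)
      exact hnA (by rw [hpa]; exact hbd.2)
  have K13 : ∀ mA mB : Fin 4, mA ≠ ia →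
      (u mA = u ia ∧ p mA + 1 = u ia ∧ u ia ∈ Xt mA ∧ u ia ∈ Yt mA ∧ u ia ∉ Yt ia) →
      (u ia = A - 1 ∧ u ib = A + 1 ∧ p mB = A ∧ A - 1 < u mB ∧ u mB < A + 1) → False := by
    intro mA mB hAa hOA hOB
    obtain ⟨e1, e2, hxA, hyA, hnA⟩ := hOA
    obtain ⟨f1, f2, f3, f4, f5⟩ := hOB
    obtain ⟨g1, g2⟩ := meet_le (hX2 ia) (hY2 ia) (hxy ia)
    rcases miss_far (hX1 ia) (hY1 mA) (hmiss ia mA (Ne.symm hAa)) with hf | hf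
    · have hpa : p ia = u ia + 1 := le_antisymm g2 (by linarith)
      have hbd := meet_boundary (hY2 ia) (hX2 ia) hpa (nonempty_comm' (hxy ia))
      have hbm := meet_boundary (hY2 mA) hC2 (by linarith : A = u mA + 1)
        (nonempty_comm' (hcy mA))
      exact hmiss ia mA (Ne.symm hAa)
        ⟨u ia + 1, hbd.2, by rw [show u ia + 1 = u mA + 1 by linarith]; exact hbm.1⟩
    · have hpa : u ia = p ia + 1 := le_antisymm g1 (by linarith)
      have hbd := meet_boundary (hX2 ia) (hY2 ia) hpa (hxy ia)
      exact hnA (by rw [hpa]; exact hbd.2)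
  have K23 : ∀ mA mB : Fin 4, mA ≠ ib →
      (u mA = u ib ∧ p mA = u ib + 1 ∧ p mA ∈ Xt mA ∧ p mA ∈ Yt mA ∧ p mA ∉ Yt ib) →
      (u ia = A - 1 ∧ u ib = A + 1 ∧ p mB = A ∧ A - 1 < u mB ∧ u mB < A + 1) → False := by
    intro mA mB hAb hOA hOB
    obtain ⟨e1, e2, hxA, hyA, hnA⟩ := hOA
    obtain ⟨f1, f2, f3, f4, f5⟩ := hOB
    obtain ⟨g1, g2⟩ := meet_le (hX2 ib) (hY2 ib) (hxy ib)
    rcases miss_far (hX1 ib) (hY1 mA) (hmiss ib mA (Ne.symm hAb)) with hf | hf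
    · -- u mA + 1 ≤ p ib, u mA = u ib so p ib = u ib + 1
      have hpb : p ib = u ib + 1 := le_antisymm g2 (by linarith)
      have hbd := meet_boundary (hY2 ib) (hX2 ib) hpb (nonempty_comm' (hxy ib))
      exact hnA (by rw [e2]; exact hbd.1)
    · -- p ib + 1 ≤ u mA = u ib, so u ib = p ib + 1
      have hpb : u ib = p ib + 1 := le_antisymm g1 (by linarith)
      have hbd := meet_boundary (hX2 ib) (hY2 ib) hpb (hxy ib)
      have hbm := meet_boundary hC2 (hY2 mA) (by linarith : u mA = A + 1) (hcy mA)
      exact hmiss ib mA (Ne.symm hAb)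
        ⟨u ib, by rw [hpb]; exact hbd.1, by rw [show u ib = A + 1 from f2]; exact hbm.2⟩
  have Om1 := mid m1 h1a h1b hle1 hle3
  have Om2 := mid m2 h2a h2b hle2 hle4
  rcases Om1 with hA | hA | hA <;> rcases Om2 with hB | hB | hB
  · exact hmiss m1 m2 hne ⟨u ia, hA.2.2.1, hB.2.2.2.1⟩
  · exact K12 m1 m2 h1a h2a hA hB
  · exact K13 m1 m2 h1a hA hB
  · exact K12 m2 m1 h2a h1a hB hA
  · exact hmiss m1 m2 hne
      ⟨p m1, hA.2.2.1, by rw [show p m1 = p m2 by linarith [hA.2.1, hB.2.1]]; exact hB.2.2.2.1⟩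
  · exact K23 m1 m2 h1b hA hB
  · exact K13 m2 m1 h2a hB hA
  · exact K23 m2 m1 h2b hB hA
  · rcases miss_far (hX1 m1) (hY1 m2) (hmiss m1 m2 hne) with h | h <;>
      linarith [hA.2.2.1, hB.2.2.2.1, hB.2.2.2.2]

def xv : Fin 4 → Fin 5 := fun j => ⟨j.val + 1, by omega⟩

/-- `B₁` is not a mixed unit interval bigraph. -/
theorem B1_not_U_bigraph : ¬ IsMBigraph UnitFam B1E := by
  rintro ⟨f, hfam, hadj⟩
  choose av hs1 hs2 using fun v => unit_struct (hfam v)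
  refine core (f (Sum.inl 0)) (fun j => f (Sum.inr j)) (fun j => f (Sum.inl (xv j)))
    (av (Sum.inl 0)) (fun j => av (Sum.inr j)) (fun j => av (Sum.inl (xv j)))
    (hs2 _) (fun j => hs1 _) (fun j => hs2 _) (fun j => hs1 _) (fun j => hs2 _)
    (fun j => (hadj 0 j).1 (Or.inl rfl))
    (fun j => (hadj (xv j) j).1 (Or.inr rfl))
    (fun j k hjk hnon => ?_)
  rcases (hadj (xv j) k).2 hnon with h | h
  · exact absurd h (by simp [xv])
  · exact hjk (Fin.ext (by simpa [xv] using h))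
end

section
/- The bigraph F₁ is a 𝓤-bigraph; that is, F₁ admits an intersection representation by unit intervals of the four types (closed, open, closed-open, open-closed). -/
/-- The bigraph `F₁`: `X = {x₁, x₂, x₃, x₄}` (index `i-1` is `xᵢ`, `x₁` the center),
`Y = {y₁, y₂, y₃, y₄}` (index `i-1` is `yᵢ`), edges
`x₁y₁, x₁y₂, x₁y₃, x₁y₄, y₁x₂, y₂x₃, y₃x₄`. -/
def F1E : Fin 4 → Fin 4 → Prop := fun x y => x.val = 0 ∨ x.val = y.val + 1

/-- The representation of `F₁`. -/
noncomputable def F1f : Fin 4 ⊕ Fin 4 → Set ℝ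
  | Sum.inl 0 => Set.Icc 0 1
  | Sum.inl 1 => Set.Icc (-2) (-1)
  | Sum.inl 2 => Set.Ioo 0 1
  | Sum.inl 3 => Set.Ioo (1/2) (3/2)
  | Sum.inr 0 => Set.Icc (-1) 0
  | Sum.inr 1 => Set.Icc (-1/2) (1/2)
  | Sum.inr 2 => Set.Icc 1 2
  | Sum.inr 3 => Set.Ioc (-1) 0

/-- `F₁` is a mixed unit interval bigraph. -/
theorem F1_U_bigraph : IsMBigraph UnitFam F1E := by
  refine ⟨F1f, ?_, ?_⟩
  · rintro (v | v) <;> fin_cases v <;>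
      simp only [F1f, UnitFam, UnitCC, UnitOO, UnitCO, UnitOC,
        Set.mem_union, Set.mem_setOf_eq]
    · exact Or.inl (Or.inl (Or.inl ⟨0, by norm_num⟩))
    · exact Or.inl (Or.inl (Or.inl ⟨-2, by norm_num⟩))
    · exact Or.inl (Or.inl (Or.inr ⟨0, by norm_num⟩))
    · exact Or.inl (Or.inl (Or.inr ⟨1/2, by norm_num⟩))
    · exact Or.inl (Or.inl (Or.inl ⟨-1, by norm_num⟩))
    · exact Or.inl (Or.inl (Or.inl ⟨-1/2, by norm_num⟩))
    · exact Or.inl (Or.inl (Or.inl ⟨1, by norm_num⟩))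
    · exact Or.inr ⟨-1, by norm_num⟩
  · intro x y
    fin_cases x <;> fin_cases y <;>
      simp only [F1E, F1f, Fin.isValue, Set.Nonempty, Set.mem_inter_iff,
        Set.mem_Icc, Set.mem_Ioo, Set.mem_Ioc] <;>
      norm_num
    · exact ⟨0, by norm_num⟩
    · exact ⟨0, by norm_num⟩
    · exact ⟨1, by norm_num⟩
    · exact ⟨0, by norm_num⟩
    · exact ⟨-1, by norm_num⟩
    · intros; linarith
    · intros; linarith
    · intros; linarith
    · intros; linarith
    · exact ⟨1/4, by norm_num⟩
    · intros; linarith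
    · intros; linarith
    · intros; linarith
    · intros; linarith
    · exact ⟨5/4, by norm_num⟩
    · intros; linarith
end

section
/- The bigraph K is not a 𝓤-bigraph; that is, K admits no intersection representation by unit intervals of the four types (closed, open, closed-open, open-closed). -/
/-- The bigraph `K`: `X = {x₁, x₂, x₃, x₄, x₄', x₅}` (indices `0,1,2,3,4,5`),
`Y = {y₁, y₂, y₂', y₃, y₃', y₄}` (indices `0,1,2,3,4,5`), edges
`x₂y₁, x₃y₁, x₃y₄, x₂y₄, x₂y₂, x₄y₂, x₂y₂', x₄'y₂', x₃y₃, x₅y₃, x₃y₃', x₁y₁`. -/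
def KE : Fin 6 → Fin 6 → Prop := fun x y =>
  (x.val, y.val) ∈
    ([(1, 0), (2, 0), (2, 5), (1, 5), (1, 1), (3, 1), (1, 2), (4, 2), (2, 3),
      (5, 3), (2, 4), (0, 0)] : List (ℕ × ℕ))


def Mk (a : ℝ) (l r : Bool) : Set ℝ :=
  if l then (if r then Set.Icc a (a+1) else Set.Ico a (a+1))
  else (if r then Set.Ioc a (a+1) else Set.Ioo a (a+1))

lemma mem_Mk_iff {x a : ℝ} {l r : Bool} :
    x ∈ Mk a l r ↔ (a < x ∨ (x = a ∧ l = true)) ∧ (x < a + 1 ∨ (x = a + 1 ∧ r = true)) := by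
  cases l <;> cases r <;>
    simp [Mk, Set.mem_Icc, Set.mem_Ico, Set.mem_Ioc, Set.mem_Ioo, le_iff_lt_or_eq, eq_comm]

def Mt (a : ℝ) (la ra : Bool) (b : ℝ) (lb rb : Bool) : Prop :=
  (a < b + 1 ∧ b < a + 1) ∨ (b = a + 1 ∧ ra = true ∧ lb = true) ∨
    (a = b + 1 ∧ rb = true ∧ la = true)

lemma inter_mt {a b : ℝ} {la ra lb rb : Bool}
    (h : (Mk a la ra ∩ Mk b lb rb).Nonempty) : Mt a la ra b lb rb := by
  obtain ⟨x, hx, hy⟩ := h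
  rw [mem_Mk_iff] at hx hy
  have hax : a ≤ x := by rcases hx.1 with h | ⟨h, _⟩ <;> linarith
  have hxa : x ≤ a + 1 := by rcases hx.2 with h | ⟨h, _⟩ <;> linarith
  have hbx : b ≤ x := by rcases hy.1 with h | ⟨h, _⟩ <;> linarith
  have hxb : x ≤ b + 1 := by rcases hy.2 with h | ⟨h, _⟩ <;> linarith
  by_cases hc : a < b + 1 ∧ b < a + 1
  · exact Or.inl hc
  push_neg at hc
  rcases le_or_gt (b + 1) a with hba | hba
  · -- x = a = b+1
    have hxe : x = a := le_antisymm (by linarith) hax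
    have hxe2 : x = b + 1 := le_antisymm hxb (by linarith)
    have hla : la = true := by
      rcases hx.1 with h | ⟨_, h⟩
      · exfalso; rw [hxe] at h; linarith
      · exact h
    have hrb : rb = true := by
      rcases hy.2 with h | ⟨_, h⟩
      · exfalso; rw [hxe2] at h; linarith
      · exact h
    exact Or.inr (Or.inr ⟨by linarith, hrb, hla⟩)
  · have hab : a + 1 ≤ b := hc hba
    have hxe : x = b := le_antisymm (by linarith) hbx
    have hxe2 : x = a + 1 := le_antisymm hxa (by linarith)
    have hlb : lb = true := by
      rcases hy.1 with h | ⟨_, h⟩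
      · exfalso; rw [hxe] at h; linarith
      · exact h
    have hra : ra = true := by
      rcases hx.2 with h | ⟨_, h⟩
      · exfalso; rw [hxe2] at h; linarith
      · exact h
    exact Or.inr (Or.inl ⟨by linarith, hra, hlb⟩)

lemma mt_inter {a b : ℝ} {la ra lb rb : Bool} (h : Mt a la ra b lb rb) :
    (Mk a la ra ∩ Mk b lb rb).Nonempty := by
  rcases h with ⟨h1, h2⟩ | ⟨hb, hr, hl⟩ | ⟨ha, hr, hl⟩
  · exact ⟨(a+b+1)/2, mem_Mk_iff.2 ⟨Or.inl (by linarith), Or.inl (by linarith)⟩,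
      mem_Mk_iff.2 ⟨Or.inl (by linarith), Or.inl (by linarith)⟩⟩
  · exact ⟨a+1, mem_Mk_iff.2 ⟨Or.inl (by linarith), Or.inr ⟨rfl, hr⟩⟩,
      mem_Mk_iff.2 ⟨Or.inr ⟨by linarith, hl⟩, Or.inl (by linarith)⟩⟩
  · exact ⟨b+1, mem_Mk_iff.2 ⟨Or.inr ⟨by linarith, hl⟩, Or.inl (by linarith)⟩,
      mem_Mk_iff.2 ⟨Or.inl (by linarith), Or.inr ⟨rfl, hr⟩⟩⟩

lemma exists_mk {s : Set ℝ} (h : s ∈ UnitFam) : ∃ a l r, s = Mk a l r := by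
  rcases h with ((⟨a, rfl⟩ | ⟨a, rfl⟩) | ⟨a, rfl⟩) | ⟨a, rfl⟩
  exacts [⟨a, true, true, by simp [Mk]⟩, ⟨a, false, false, by simp [Mk]⟩,
    ⟨a, true, false, by simp [Mk]⟩, ⟨a, false, true, by simp [Mk]⟩]

lemma Mt.d1 {a b : ℝ} {la ra lb rb : Bool} (h : Mt a la ra b lb rb) : b ≤ a + 1 := by
  rcases h with ⟨h, h'⟩ | ⟨h, _⟩ | ⟨h, _⟩ <;> linarith

lemma Mt.d2 {a b : ℝ} {la ra lb rb : Bool} (h : Mt a la ra b lb rb) : a ≤ b + 1 := by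
  rcases h with ⟨h, h'⟩ | ⟨h, _⟩ | ⟨h, _⟩ <;> linarith

lemma Mt.tr {a b : ℝ} {la ra lb rb : Bool} (h : Mt a la ra b lb rb) (e : b = a + 1) :
    ra = true ∧ lb = true := by
  rcases h with ⟨h, h'⟩ | ⟨_, h⟩ | ⟨h, _⟩
  · exfalso; linarith
  · exact h
  · exfalso; linarith

lemma Mt.tl {a b : ℝ} {la ra lb rb : Bool} (h : Mt a la ra b lb rb) (e : a = b + 1) :
    rb = true ∧ la = true := by
  rcases h with ⟨h, h'⟩ | ⟨h, _⟩ | ⟨_, h⟩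
  · exfalso; linarith
  · exfalso; linarith
  · exact h

lemma nmt_d {a b : ℝ} {la ra lb rb : Bool} (h : ¬ Mt a la ra b lb rb) :
    a + 1 ≤ b ∨ b + 1 ≤ a := by
  by_contra hc
  push_neg at hc
  exact h (Or.inl ⟨by linarith [hc.1], by linarith [hc.2]⟩)

lemma nmt_tr {a b : ℝ} {la ra lb rb : Bool} (h : ¬ Mt a la ra b lb rb) (e : b = a + 1) :
    ¬ (ra = true ∧ lb = true) := fun hh => h (Or.inr (Or.inl ⟨e, hh.1, hh.2⟩))

lemma nmt_tl {a b : ℝ} {la ra lb rb : Bool} (h : ¬ Mt a la ra b lb rb) (e : a = b + 1) :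
    ¬ (rb = true ∧ la = true) := fun hh => h (Or.inr (Or.inr ⟨e, hh.1, hh.2⟩))

lemma nand_r {x y : Bool} (h : ¬ (x = true ∧ y = true)) (hx : x = true) : y = false := by
  cases y
  · rfl
  · exact absurd ⟨hx, rfl⟩ h

lemma nand_l {x y : Bool} (h : ¬ (x = true ∧ y = true)) (hy : y = true) : x = false := by
  cases x
  · rfl
  · exact absurd ⟨rfl, hy⟩ h

lemma bool_ff {x : Bool} (h1 : x = false) (h2 : x = true) : False := by
  rw [h1] at h2; exact Bool.noConfusion h2

lemma key_s9
    {p a b d d' u c1 c2 c2' c3 c4 : ℝ}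
    {lp rp la ra lb rb ld rd ld' rd' lu ru m1 s1 m2 s2 m2' s2' m3 s3 m4 s4 : Bool}
    (E11 : Mt p lp rp c1 m1 s1)
    (E21 : Mt a la ra c1 m1 s1)
    (E31 : Mt b lb rb c1 m1 s1)
    (E24 : Mt a la ra c4 m4 s4)
    (E34 : Mt b lb rb c4 m4 s4)
    (E22 : Mt a la ra c2 m2 s2)
    (E22' : Mt a la ra c2' m2' s2')
    (E42 : Mt d ld rd c2 m2 s2)
    (E4'2' : Mt d' ld' rd' c2' m2' s2')
    (E33 : Mt b lb rb c3 m3 s3)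
    (E53 : Mt u lu ru c3 m3 s3)
    (N32 : ¬ Mt b lb rb c2 m2 s2)
    (N32' : ¬ Mt b lb rb c2' m2' s2')
    (N23 : ¬ Mt a la ra c3 m3 s3)
    (N12 : ¬ Mt p lp rp c2 m2 s2)
    (N12' : ¬ Mt p lp rp c2' m2' s2')
    (N13 : ¬ Mt p lp rp c3 m3 s3)
    (N14 : ¬ Mt p lp rp c4 m4 s4)
    (N41 : ¬ Mt d ld rd c1 m1 s1)
    (N44 : ¬ Mt d ld rd c4 m4 s4)
    (N42' : ¬ Mt d ld rd c2' m2' s2')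
    (N4'4 : ¬ Mt d' ld' rd' c4 m4 s4)
    (N4'2 : ¬ Mt d' ld' rd' c2 m2 s2)
    (N51 : ¬ Mt u lu ru c1 m1 s1) : False := by
  have B21a : c1 ≤ a + 1 := E21.d1
  have B21b : a ≤ c1 + 1 := E21.d2
  have B31a : c1 ≤ b + 1 := E31.d1
  have B31b : b ≤ c1 + 1 := E31.d2
  have B24a : c4 ≤ a + 1 := E24.d1
  have B24b : a ≤ c4 + 1 := E24.d2
  have B34a : c4 ≤ b + 1 := E34.d1
  have B34b : b ≤ c4 + 1 := E34.d2
  have B22a : c2 ≤ a + 1 := E22.d1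
  have B22b : a ≤ c2 + 1 := E22.d2
  have B22'a : c2' ≤ a + 1 := E22'.d1
  have B22'b : a ≤ c2' + 1 := E22'.d2
  have B33a : c3 ≤ b + 1 := E33.d1
  have B33b : b ≤ c3 + 1 := E33.d2
  have B11a : c1 ≤ p + 1 := E11.d1
  have B11b : p ≤ c1 + 1 := E11.d2
  have B42a : c2 ≤ d + 1 := E42.d1
  have B42b : d ≤ c2 + 1 := E42.d2
  have B4'2'a : c2' ≤ d' + 1 := E4'2'.d1
  have B4'2'b : d' ≤ c2' + 1 := E4'2'.d2
  rcases lt_trichotomy a b with hab | hab | hab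
  · -- Case a < b
    have hc2 : c2 + 1 ≤ b := by
      rcases nmt_d N32 with h | h
      · exfalso; linarith
      · exact h
    have hc2' : c2' + 1 ≤ b := by
      rcases nmt_d N32' with h | h
      · exfalso; linarith
      · exact h
    have hc3 : a + 1 ≤ c3 := by
      rcases nmt_d N23 with h | h
      · exact h
      · exfalso; linarith
    have hba2 : b ≤ a + 2 := by linarith
    rcases eq_or_lt_of_le hba2 with hb2 | hb2
    · -- b = a + 2
      have hc1 : c1 = a + 1 := by linarith
      have hc4 : c4 = a + 1 := by linarith
      obtain ⟨hra, hm1⟩ := E21.tr (by linarith)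
      obtain ⟨hs1, hlb⟩ := E31.tl (by linarith)
      obtain ⟨_, hm4⟩ := E24.tr (by linarith)
      obtain ⟨hs4, _⟩ := E34.tl (by linarith)
      rcases nmt_d N14 with h | h
      · obtain ⟨hrp, _⟩ := E11.tr (by linarith : c1 = p + 1)
        exact nmt_tr N14 (by linarith : c4 = p + 1) ⟨hrp, hm4⟩
      · obtain ⟨_, hlp⟩ := E11.tl (by linarith : p = c1 + 1)
        exact nmt_tl N14 (by linarith : p = c4 + 1) ⟨hs4, hlp⟩
    · -- b < a + 2
      rcases nmt_d N12 with hA | hM2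
      · -- Left: p + 1 ≤ c2
        have hp : p = b - 2 := by linarith
        have hc2e : c2 = b - 1 := by linarith
        have hc1e : c1 = b - 1 := by linarith
        obtain ⟨hrp, hm1⟩ := E11.tr (by linarith : c1 = p + 1)
        have hm2 : m2 = false := nand_r (nmt_tr N12 (by linarith : c2 = p + 1)) hrp
        obtain ⟨hs1, hlb⟩ := E31.tl (by linarith : b = c1 + 1)
        have hs2 : s2 = false := nand_l (nmt_tl N32 (by linarith : b = c2 + 1)) hlb
        rcases E42 with ⟨h1, h2⟩ | ⟨_, _, hm⟩ | ⟨_, hs, _⟩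
        · rcases nmt_d N41 with h | h <;> linarith
        · exact bool_ff hm2 hm
        · exact bool_ff hs2 hs
      · rcases nmt_d N13 with hM3 | hB
        · -- Middle: c2 + 1 ≤ p and p + 1 ≤ c3
          rcases nmt_d N14 with h4 | h4
          · -- (ii) p + 1 ≤ c4 : p = a
            have hp : p = a := by linarith
            have hc4e : c4 = a + 1 := by linarith
            have hc2e : c2 = a - 1 := by linarith
            have hc2'e : c2' = a - 1 := by
              rcases nmt_d N12' with hh | hh
              · exfalso; linarith
              · linarith
            obtain ⟨hs2, hla⟩ := E22.tl (by linarith : a = c2 + 1)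
            obtain ⟨hs2', _⟩ := E22'.tl (by linarith : a = c2' + 1)
            rcases nmt_d N42' with h | h
            · -- d = a - 2
              obtain ⟨hrd, hm2⟩ := E42.tr (by linarith : c2 = d + 1)
              have hm2'f : m2' = false := nand_r (nmt_tr N42' (by linarith : c2' = d + 1)) hrd
              rcases nmt_d N4'2 with h' | h'
              · -- d' = a - 2
                obtain ⟨hrd', hm2'⟩ := E4'2'.tr (by linarith : c2' = d' + 1)
                exact bool_ff hm2'f hm2'
              · -- d' = a
                have hld'f : ld' = false := nand_r (nmt_tl N4'2 (by linarith : d' = c2 + 1)) hs2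
                obtain ⟨_, hld'⟩ := E4'2'.tl (by linarith : d' = c2' + 1)
                exact bool_ff hld'f hld'
            · -- d = a
              obtain ⟨hs2x, hld⟩ := E42.tl (by linarith : d = c2 + 1)
              have hldf : ld = false := nand_r (nmt_tl N42' (by linarith : d = c2' + 1)) hs2'
              exact bool_ff hldf hld
          · -- (i) c4 + 1 ≤ p : p = b
            have hp : p = b := by linarith
            have hc4e : c4 = b - 1 := by linarith
            obtain ⟨hs4, hlb⟩ := E34.tl (by linarith : b = c4 + 1)
            rcases nmt_d N44 with h | h
            · -- d ≤ b - 2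
              rcases nmt_d N4'4 with h' | h'
              · -- d' ≤ b - 2 : chain
                have h1 : d + 1 ≤ c2' := by
                  rcases nmt_d N42' with hh | hh
                  · exact hh
                  · exfalso; linarith
                have h2 : d' + 1 ≤ c2 := by
                  rcases nmt_d N4'2 with hh | hh
                  · exact hh
                  · exfalso; linarith
                obtain ⟨hrd, hm2⟩ := E42.tr (by linarith : c2 = d + 1)
                obtain ⟨hrd', hm2'⟩ := E4'2'.tr (by linarith : c2' = d' + 1)
                exact nmt_tr N42' (by linarith : c2' = d + 1) ⟨hrd, hm2'⟩
              · -- d' = b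
                have hd' : d' = b := by linarith
                have hc2'e : c2' = b - 1 := by linarith
                obtain ⟨hs2', hld'⟩ := E4'2'.tl (by linarith : d' = c2' + 1)
                exact nmt_tl N4'4 (by linarith : d' = c4 + 1) ⟨hs4, hld'⟩
            · -- d = b
              have hd : d = b := by linarith
              have hc2e : c2 = b - 1 := by linarith
              obtain ⟨hs2, hld⟩ := E42.tl (by linarith : d = c2 + 1)
              exact nmt_tl N44 (by linarith : d = c4 + 1) ⟨hs4, hld⟩
        · -- Right: c3 + 1 ≤ p
          have hp : p = a + 2 := by linarith
          have hc3e : c3 = a + 1 := by linarith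
          have hc1e : c1 = a + 1 := by linarith
          obtain ⟨hs1, hlp⟩ := E11.tl (by linarith : p = c1 + 1)
          have hs3 : s3 = false := nand_l (nmt_tl N13 (by linarith : p = c3 + 1)) hlp
          obtain ⟨hra, hm1⟩ := E21.tr (by linarith : c1 = a + 1)
          have hm3 : m3 = false := nand_r (nmt_tr N23 (by linarith : c3 = a + 1)) hra
          rcases E53 with ⟨h1, h2⟩ | ⟨_, _, hm⟩ | ⟨_, hs, _⟩
          · rcases nmt_d N51 with h | h <;> linarith
          · exact bool_ff hm3 hm
          · exact bool_ff hs3 hs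
  · -- Case a = b
    subst hab
    have hc2 : c2 = a + 1 ∨ c2 = a - 1 := by
      rcases nmt_d N32 with h | h
      · left; linarith
      · right; linarith
    have hc3 : c3 = a + 1 ∨ c3 = a - 1 := by
      rcases nmt_d N23 with h | h
      · left; linarith
      · right; linarith
    rcases hc3 with hc3 | hc3
    · -- c3 = a + 1
      obtain ⟨hrb, hm3⟩ := E33.tr (by linarith)
      have hra : ra = false := nand_l (nmt_tr N23 (by linarith)) hm3
      have hc2e : c2 = a - 1 := by
        rcases hc2 with h | h
        · exfalso
          obtain ⟨hra', _⟩ := E22.tr (by linarith)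
          exact bool_ff hra hra'
        · exact h
      obtain ⟨hs2, hla⟩ := E22.tl (by linarith : a = c2 + 1)
      have hlb : lb = false := nand_r (nmt_tl N32 (by linarith : a = c2 + 1)) hs2
      have hc1lt : c1 < a + 1 := by
        rcases lt_or_eq_of_le B21a with h | h
        · exact h
        · exfalso
          obtain ⟨hra', _⟩ := E21.tr (by linarith)
          exact bool_ff hra hra'
      have hc1gt : a - 1 < c1 := by
        rcases eq_or_lt_of_le (by linarith : a - 1 ≤ c1) with h | h
        · exfalso
          obtain ⟨_, hlbx⟩ := E31.tl (by linarith : a = c1 + 1)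
          exact bool_ff hlb hlbx
        · exact h
      have hc4lt : c4 < a + 1 := by
        rcases lt_or_eq_of_le B24a with h | h
        · exact h
        · exfalso
          obtain ⟨hra', _⟩ := E24.tr (by linarith)
          exact bool_ff hra hra'
      have hc4gt : a - 1 < c4 := by
        rcases eq_or_lt_of_le (by linarith : a - 1 ≤ c4) with h | h
        · exfalso
          obtain ⟨_, hlbx⟩ := E34.tl (by linarith : a = c4 + 1)
          exact bool_ff hlb hlbx
        · exact h
      have hpa : a ≤ p := by
        rcases nmt_d N12 with h | h
        · exfalso; linarith
        · linarith
      have hpb : p ≤ a := by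
        rcases nmt_d N13 with h | h
        · linarith
        · exfalso; linarith
      rcases nmt_d N14 with h | h <;> linarith
    · -- c3 = a - 1
      obtain ⟨hs3, hlb⟩ := E33.tl (by linarith : a = c3 + 1)
      have hla : la = false := nand_r (nmt_tl N23 (by linarith : a = c3 + 1)) hs3
      have hc2e : c2 = a + 1 := by
        rcases hc2 with h | h
        · exact h
        · exfalso
          obtain ⟨_, hlax⟩ := E22.tl (by linarith : a = c2 + 1)
          exact bool_ff hla hlax
      obtain ⟨hra, hm2⟩ := E22.tr (by linarith)
      have hrb : rb = false := nand_l (nmt_tr N32 (by linarith : c2 = a + 1)) hm2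
      have hc1lt : c1 < a + 1 := by
        rcases lt_or_eq_of_le B31a with h | h
        · exact h
        · exfalso
          obtain ⟨hrbx, _⟩ := E31.tr (by linarith)
          exact bool_ff hrb hrbx
      have hc1gt : a - 1 < c1 := by
        rcases eq_or_lt_of_le (by linarith : a - 1 ≤ c1) with h | h
        · exfalso
          obtain ⟨_, hlax⟩ := E21.tl (by linarith : a = c1 + 1)
          exact bool_ff hla hlax
        · exact h
      have hc4lt : c4 < a + 1 := by
        rcases lt_or_eq_of_le B34a with h | h
        · exact h
        · exfalso
          obtain ⟨hrbx, _⟩ := E34.tr (by linarith)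
          exact bool_ff hrb hrbx
      have hc4gt : a - 1 < c4 := by
        rcases eq_or_lt_of_le (by linarith : a - 1 ≤ c4) with h | h
        · exfalso
          obtain ⟨_, hlax⟩ := E24.tl (by linarith : a = c4 + 1)
          exact bool_ff hla hlax
        · exact h
      have hpb : p ≤ a := by
        rcases nmt_d N12 with h | h
        · linarith
        · exfalso; linarith
      have hpa : a ≤ p := by
        rcases nmt_d N13 with h | h
        · exfalso; linarith
        · linarith
      rcases nmt_d N14 with h | h <;> linarith
  · -- Case b < a
    have hc3 : c3 + 1 ≤ a := by
      rcases nmt_d N23 with h | h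
      · exfalso; linarith
      · exact h
    have hc2 : b + 1 ≤ c2 := by
      rcases nmt_d N32 with h | h
      · exact h
      · exfalso; linarith
    have hc2' : b + 1 ≤ c2' := by
      rcases nmt_d N32' with h | h
      · exact h
      · exfalso; linarith
    have hab2 : a ≤ b + 2 := by linarith
    rcases eq_or_lt_of_le hab2 with ha2 | ha2
    · -- a = b + 2
      have hc1 : c1 = b + 1 := by linarith
      have hc4 : c4 = b + 1 := by linarith
      obtain ⟨hrb, hm1⟩ := E31.tr (by linarith : c1 = b + 1)
      obtain ⟨hs1, hla⟩ := E21.tl (by linarith : a = c1 + 1)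
      obtain ⟨_, hm4⟩ := E34.tr (by linarith : c4 = b + 1)
      obtain ⟨hs4, _⟩ := E24.tl (by linarith : a = c4 + 1)
      rcases nmt_d N14 with h | h
      · obtain ⟨hrp, _⟩ := E11.tr (by linarith : c1 = p + 1)
        exact nmt_tr N14 (by linarith : c4 = p + 1) ⟨hrp, hm4⟩
      · obtain ⟨_, hlp⟩ := E11.tl (by linarith : p = c1 + 1)
        exact nmt_tl N14 (by linarith : p = c4 + 1) ⟨hs4, hlp⟩
    · -- a < b + 2
      rcases nmt_d N13 with hA | hM3
      · -- Left: p + 1 ≤ c3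
        have hp : p = a - 2 := by linarith
        have hc3e : c3 = a - 1 := by linarith
        have hc1e : c1 = a - 1 := by linarith
        obtain ⟨hrp, hm1⟩ := E11.tr (by linarith : c1 = p + 1)
        have hm3 : m3 = false := nand_r (nmt_tr N13 (by linarith : c3 = p + 1)) hrp
        obtain ⟨hs1, hla⟩ := E21.tl (by linarith : a = c1 + 1)
        have hs3 : s3 = false := nand_l (nmt_tl N23 (by linarith : a = c3 + 1)) hla
        rcases E53 with ⟨h1, h2⟩ | ⟨_, _, hm⟩ | ⟨_, hs, _⟩
        · rcases nmt_d N51 with h | h <;> linarith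
        · exact bool_ff hm3 hm
        · exact bool_ff hs3 hs
      · rcases nmt_d N12 with hM2 | hB
        · -- Middle: c3 + 1 ≤ p and p + 1 ≤ c2
          rcases nmt_d N14 with h4 | h4
          · -- (i) p + 1 ≤ c4 : p = b
            have hp : p = b := by linarith
            have hc4e : c4 = b + 1 := by linarith
            obtain ⟨hrb, hm4⟩ := E34.tr (by linarith : c4 = b + 1)
            rcases nmt_d N44 with h | h
            · -- d = b
              have hd : d = b := by linarith
              have hc2e : c2 = b + 1 := by linarith
              obtain ⟨hrd, hm2⟩ := E42.tr (by linarith : c2 = d + 1)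
              exact nmt_tr N44 (by linarith : c4 = d + 1) ⟨hrd, hm4⟩
            · -- d ≥ b + 2
              rcases nmt_d N4'4 with h' | h'
              · -- d' = b
                have hd' : d' = b := by linarith
                have hc2'e : c2' = b + 1 := by linarith
                obtain ⟨hrd', hm2'⟩ := E4'2'.tr (by linarith : c2' = d' + 1)
                exact nmt_tr N4'4 (by linarith : c4 = d' + 1) ⟨hrd', hm4⟩
              · -- d' ≥ b + 2 : chain
                have h1 : c2' + 1 ≤ d := by
                  rcases nmt_d N42' with hh | hh
                  · exfalso; linarith
                  · exact hh
                have h2 : c2 + 1 ≤ d' := by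
                  rcases nmt_d N4'2 with hh | hh
                  · exfalso; linarith
                  · exact hh
                obtain ⟨hs2, hld⟩ := E42.tl (by linarith : d = c2 + 1)
                obtain ⟨hs2', hld'⟩ := E4'2'.tl (by linarith : d' = c2' + 1)
                exact nmt_tl N4'2 (by linarith : d' = c2 + 1) ⟨hs2, hld'⟩
          · -- (ii) c4 + 1 ≤ p : p = a
            have hp : p = a := by linarith
            have hc4e : c4 = a - 1 := by linarith
            have hc2e : c2 = a + 1 := by linarith
            have hc2'e : c2' = a + 1 := by
              rcases nmt_d N12' with hh | hh
              · linarith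
              · exfalso; linarith
            obtain ⟨hra, hm2⟩ := E22.tr (by linarith : c2 = a + 1)
            obtain ⟨_, hm2'⟩ := E22'.tr (by linarith : c2' = a + 1)
            rcases nmt_d N42' with h | h
            · -- d = a
              obtain ⟨hrd, _⟩ := E42.tr (by linarith : c2 = d + 1)
              exact nmt_tr N42' (by linarith : c2' = d + 1) ⟨hrd, hm2'⟩
            · -- d = a + 2
              obtain ⟨hs2, hld⟩ := E42.tl (by linarith : d = c2 + 1)
              have hs2'f : s2' = false := nand_l (nmt_tl N42' (by linarith : d = c2' + 1)) hld
              rcases nmt_d N4'2 with h' | h'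
              · -- d' = a
                obtain ⟨hrd', _⟩ := E4'2'.tr (by linarith : c2' = d' + 1)
                exact nmt_tr N4'2 (by linarith : c2 = d' + 1) ⟨hrd', hm2⟩
              · -- d' = a + 2
                obtain ⟨hs2', _⟩ := E4'2'.tl (by linarith : d' = c2' + 1)
                exact bool_ff hs2'f hs2'
        · -- Right: c2 + 1 ≤ p
          have hp : p = b + 2 := by linarith
          have hc2e : c2 = b + 1 := by linarith
          have hc1e : c1 = b + 1 := by linarith
          obtain ⟨hs1, hlp⟩ := E11.tl (by linarith : p = c1 + 1)
          have hs2 : s2 = false := nand_l (nmt_tl N12 (by linarith : p = c2 + 1)) hlp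
          obtain ⟨hrb, hm1⟩ := E31.tr (by linarith : c1 = b + 1)
          have hm2 : m2 = false := nand_r (nmt_tr N32 (by linarith : c2 = b + 1)) hrb
          rcases E42 with ⟨h1, h2⟩ | ⟨_, _, hm⟩ | ⟨_, hs, _⟩
          · rcases nmt_d N41 with h | h <;> linarith
          · exact bool_ff hm2 hm
          · exact bool_ff hs2 hs

/-- `K` is not a mixed unit interval bigraph. -/
theorem K_not_U_bigraph : ¬ IsMBigraph UnitFam KE := by
  rintro ⟨f, hmem, hadj⟩
  obtain ⟨p, lp, rp, hx1⟩ := exists_mk (hmem (Sum.inl 0))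
  obtain ⟨a, la, ra, hx2⟩ := exists_mk (hmem (Sum.inl 1))
  obtain ⟨b, lb, rb, hx3⟩ := exists_mk (hmem (Sum.inl 2))
  obtain ⟨d, ld, rd, hx4⟩ := exists_mk (hmem (Sum.inl 3))
  obtain ⟨d', ld', rd', hx4'⟩ := exists_mk (hmem (Sum.inl 4))
  obtain ⟨u, lu, ru, hx5⟩ := exists_mk (hmem (Sum.inl 5))
  obtain ⟨c1, m1, s1, hy1⟩ := exists_mk (hmem (Sum.inr 0))
  obtain ⟨c2, m2, s2, hy2⟩ := exists_mk (hmem (Sum.inr 1))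
  obtain ⟨c2', m2', s2', hy2'⟩ := exists_mk (hmem (Sum.inr 2))
  obtain ⟨c3, m3, s3, hy3⟩ := exists_mk (hmem (Sum.inr 3))
  obtain ⟨c4, m4, s4, hy4⟩ := exists_mk (hmem (Sum.inr 5))
  have E11 : Mt p lp rp c1 m1 s1 := by
    have h := (hadj 0 0).1 (by unfold KE; decide); rw [hx1, hy1] at h; exact inter_mt h
  have E21 : Mt a la ra c1 m1 s1 := by
    have h := (hadj 1 0).1 (by unfold KE; decide); rw [hx2, hy1] at h; exact inter_mt h
  have E31 : Mt b lb rb c1 m1 s1 := by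
    have h := (hadj 2 0).1 (by unfold KE; decide); rw [hx3, hy1] at h; exact inter_mt h
  have E24 : Mt a la ra c4 m4 s4 := by
    have h := (hadj 1 5).1 (by unfold KE; decide); rw [hx2, hy4] at h; exact inter_mt h
  have E34 : Mt b lb rb c4 m4 s4 := by
    have h := (hadj 2 5).1 (by unfold KE; decide); rw [hx3, hy4] at h; exact inter_mt h
  have E22 : Mt a la ra c2 m2 s2 := by
    have h := (hadj 1 1).1 (by unfold KE; decide); rw [hx2, hy2] at h; exact inter_mt h
  have E22' : Mt a la ra c2' m2' s2' := by
    have h := (hadj 1 2).1 (by unfold KE; decide); rw [hx2, hy2'] at h; exact inter_mt h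
  have E42 : Mt d ld rd c2 m2 s2 := by
    have h := (hadj 3 1).1 (by unfold KE; decide); rw [hx4, hy2] at h; exact inter_mt h
  have E4'2' : Mt d' ld' rd' c2' m2' s2' := by
    have h := (hadj 4 2).1 (by unfold KE; decide); rw [hx4', hy2'] at h; exact inter_mt h
  have E33 : Mt b lb rb c3 m3 s3 := by
    have h := (hadj 2 3).1 (by unfold KE; decide); rw [hx3, hy3] at h; exact inter_mt h
  have E53 : Mt u lu ru c3 m3 s3 := by
    have h := (hadj 5 3).1 (by unfold KE; decide); rw [hx5, hy3] at h; exact inter_mt h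
  have N32 : ¬ Mt b lb rb c2 m2 s2 := fun hm => (by unfold KE; decide : ¬ KE 2 1)
    ((hadj 2 1).2 (by rw [hx3, hy2]; exact mt_inter hm))
  have N32' : ¬ Mt b lb rb c2' m2' s2' := fun hm => (by unfold KE; decide : ¬ KE 2 2)
    ((hadj 2 2).2 (by rw [hx3, hy2']; exact mt_inter hm))
  have N23 : ¬ Mt a la ra c3 m3 s3 := fun hm => (by unfold KE; decide : ¬ KE 1 3)
    ((hadj 1 3).2 (by rw [hx2, hy3]; exact mt_inter hm))
  have N12 : ¬ Mt p lp rp c2 m2 s2 := fun hm => (by unfold KE; decide : ¬ KE 0 1)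
    ((hadj 0 1).2 (by rw [hx1, hy2]; exact mt_inter hm))
  have N12' : ¬ Mt p lp rp c2' m2' s2' := fun hm => (by unfold KE; decide : ¬ KE 0 2)
    ((hadj 0 2).2 (by rw [hx1, hy2']; exact mt_inter hm))
  have N13 : ¬ Mt p lp rp c3 m3 s3 := fun hm => (by unfold KE; decide : ¬ KE 0 3)
    ((hadj 0 3).2 (by rw [hx1, hy3]; exact mt_inter hm))
  have N14 : ¬ Mt p lp rp c4 m4 s4 := fun hm => (by unfold KE; decide : ¬ KE 0 5)
    ((hadj 0 5).2 (by rw [hx1, hy4]; exact mt_inter hm))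
  have N41 : ¬ Mt d ld rd c1 m1 s1 := fun hm => (by unfold KE; decide : ¬ KE 3 0)
    ((hadj 3 0).2 (by rw [hx4, hy1]; exact mt_inter hm))
  have N44 : ¬ Mt d ld rd c4 m4 s4 := fun hm => (by unfold KE; decide : ¬ KE 3 5)
    ((hadj 3 5).2 (by rw [hx4, hy4]; exact mt_inter hm))
  have N42' : ¬ Mt d ld rd c2' m2' s2' := fun hm => (by unfold KE; decide : ¬ KE 3 2)
    ((hadj 3 2).2 (by rw [hx4, hy2']; exact mt_inter hm))
  have N4'4 : ¬ Mt d' ld' rd' c4 m4 s4 := fun hm => (by unfold KE; decide : ¬ KE 4 5)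
    ((hadj 4 5).2 (by rw [hx4', hy4]; exact mt_inter hm))
  have N4'2 : ¬ Mt d' ld' rd' c2 m2 s2 := fun hm => (by unfold KE; decide : ¬ KE 4 1)
    ((hadj 4 1).2 (by rw [hx4', hy2]; exact mt_inter hm))
  have N51 : ¬ Mt u lu ru c1 m1 s1 := fun hm => (by unfold KE; decide : ¬ KE 5 0)
    ((hadj 5 0).2 (by rw [hx5, hy1]; exact mt_inter hm))
  exact key_s9 E11 E21 E31 E24 E34 E22 E22' E42 E4'2' E33 E53 N32 N32' N23 N12 N12'
    N13 N14 N41 N44 N42' N4'4 N4'2 N51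
end

section
/- The bigraph M is not a 𝓤-bigraph; that is, M admits no intersection representation by unit intervals of the four types (closed, open, closed-open, open-closed). -/
/-- The bigraph `M`: `X = {x₁, …, x₅}` (indices `0,…,4`),
`Y = {y₁, …, y₆}` (indices `0,…,5`), edges
`x₃y₃, x₃y₁, x₃y₄, x₂y₄, x₂y₁, x₂y₂, x₅y₁, x₁y₁, x₄y₁, x₁y₅, x₄y₅, x₁y₆`. -/
def ME : Fin 5 → Fin 6 → Prop := fun x y =>
  (x.val, y.val) ∈
    ([(2, 2), (2, 0), (2, 3), (1, 3), (1, 0), (1, 1), (4, 0), (0, 0), (3, 0),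
      (0, 4), (3, 4), (0, 5)] : List (ℕ × ℕ))

/-- Arithmetic form of "the two unit intervals meet" (edge). -/
def Edg (a : ℝ) (la ra : Prop) (b : ℝ) (lb rb : Prop) : Prop :=
  (a - 1 ≤ b ∧ b ≤ a + 1) ∧ (b = a + 1 → ra ∧ lb) ∧ (a = b + 1 → rb ∧ la)

/-- Arithmetic form of "the two unit intervals do not meet" (non-edge). -/
def NEdg (a : ℝ) (la ra : Prop) (b : ℝ) (lb rb : Prop) : Prop :=
  (b ≥ a + 1 ∨ a ≥ b + 1) ∧ (b = a + 1 → ¬(ra ∧ lb)) ∧ (a = b + 1 → ¬(rb ∧ la))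

lemma unit_bounds {s : Set ℝ} (hs : s ∈ UnitFam) :
    ∃ a : ℝ, Set.Ioo a (a+1) ⊆ s ∧ s ⊆ Set.Icc a (a+1) := by
  rcases hs with ((⟨a, rfl⟩ | ⟨a, rfl⟩) | ⟨a, rfl⟩) | ⟨a, rfl⟩
  exacts [⟨a, Set.Ioo_subset_Icc_self, subset_rfl⟩,
    ⟨a, subset_rfl, Set.Ioo_subset_Icc_self⟩,
    ⟨a, Set.Ioo_subset_Ico_self, Set.Ico_subset_Icc_self⟩,
    ⟨a, Set.Ioo_subset_Ioc_self, Set.Ioc_subset_Icc_self⟩]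

lemma to_Edg {s t : Set ℝ} {a b : ℝ}
    (h2 : s ⊆ Set.Icc a (a+1)) (h4 : t ⊆ Set.Icc b (b+1))
    (h : (s ∩ t).Nonempty) :
    Edg a (a ∈ s) (a+1 ∈ s) b (b ∈ t) (b+1 ∈ t) := by
  obtain ⟨x, hxs, hxt⟩ := h
  obtain ⟨ha1, ha2⟩ := h2 hxs
  obtain ⟨hb1, hb2⟩ := h4 hxt
  refine ⟨⟨by linarith, by linarith⟩, fun hb => ?_, fun ha => ?_⟩
  · have hx1 : x = a + 1 := le_antisymm ha2 (by linarith)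
    have hx2 : x = b := by linarith
    exact ⟨by rw [← hx1]; exact hxs, by rw [← hx2]; exact hxt⟩
  · have hx1 : x = b + 1 := le_antisymm hb2 (by linarith)
    have hx2 : x = a := by linarith
    exact ⟨by rw [← hx1]; exact hxt, by rw [← hx2]; exact hxs⟩

lemma to_NEdg {s t : Set ℝ} {a b : ℝ}
    (h1 : Set.Ioo a (a+1) ⊆ s) (h3 : Set.Ioo b (b+1) ⊆ t)
    (h : ¬ (s ∩ t).Nonempty) :
    NEdg a (a ∈ s) (a+1 ∈ s) b (b ∈ t) (b+1 ∈ t) := by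
  refine ⟨?_, fun hb hc => h ⟨a + 1, hc.1, by rw [← hb]; exact hc.2⟩,
    fun ha hc => h ⟨b + 1, by rw [← ha]; exact hc.2, hc.1⟩⟩
  by_contra hcon
  push_neg at hcon
  obtain ⟨hc1, hc2⟩ := hcon
  have hAm : a ≤ max a b := le_max_left _ _
  have hBm : b ≤ max a b := le_max_right _ _
  have hmA : min (a+1) (b+1) ≤ a + 1 := min_le_left _ _
  have hmB : min (a+1) (b+1) ≤ b + 1 := min_le_right _ _
  have hmx : max a b < min (a+1) (b+1) :=
    max_lt (lt_min (by linarith) (by linarith)) (lt_min (by linarith) (by linarith))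
  exact h ⟨(max a b + min (a+1) (b+1))/2,
    h1 ⟨by linarith, by linarith⟩, h3 ⟨by linarith, by linarith⟩⟩

lemma Edg_neg {a b : ℝ} {la ra lb rb : Prop} (h : Edg a la ra b lb rb) :
    Edg (-1-a) ra la (-1-b) rb lb := by
  obtain ⟨⟨h1, h2⟩, h3, h4⟩ := h
  refine ⟨⟨by linarith, by linarith⟩, fun h' => ?_, fun h' => ?_⟩
  · have := h4 (by linarith); exact ⟨this.2, this.1⟩
  · have := h3 (by linarith); exact ⟨this.2, this.1⟩

lemma NEdg_neg {a b : ℝ} {la ra lb rb : Prop} (h : NEdg a la ra b lb rb) :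
    NEdg (-1-a) ra la (-1-b) rb lb := by
  obtain ⟨h1, h3, h4⟩ := h
  refine ⟨?_, fun h' hc => h4 (by linarith) ⟨hc.2, hc.1⟩,
    fun h' hc => h3 (by linarith) ⟨hc.2, hc.1⟩⟩
  rcases h1 with h | h
  · right; linarith
  · left; linarith

lemma core_s10 {p s1 s2 s3 s4 s5 q2 q3 q4 q5 q6 : ℝ}
    {lp rp l1 r1 l2 r2 l3 r3 l4 r4 l5 r5
     lq2 rq2 lq3 rq3 lq4 rq4 lq5 rq5 lq6 rq6 : Prop}
    (e11 : Edg s1 l1 r1 p lp rp) (e21 : Edg s2 l2 r2 p lp rp)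
    (e31 : Edg s3 l3 r3 p lp rp) (e41 : Edg s4 l4 r4 p lp rp)
    (e51 : Edg s5 l5 r5 p lp rp)
    (e24 : Edg s2 l2 r2 q4 lq4 rq4) (e34 : Edg s3 l3 r3 q4 lq4 rq4)
    (e15 : Edg s1 l1 r1 q5 lq5 rq5) (e45 : Edg s4 l4 r4 q5 lq5 rq5)
    (e16 : Edg s1 l1 r1 q6 lq6 rq6)
    (e22 : Edg s2 l2 r2 q2 lq2 rq2) (e33 : Edg s3 l3 r3 q3 lq3 rq3)
    (n12 : NEdg s1 l1 r1 q2 lq2 rq2) (n13 : NEdg s1 l1 r1 q3 lq3 rq3)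
    (n14 : NEdg s1 l1 r1 q4 lq4 rq4)
    (n23 : NEdg s2 l2 r2 q3 lq3 rq3) (n25 : NEdg s2 l2 r2 q5 lq5 rq5)
    (n26 : NEdg s2 l2 r2 q6 lq6 rq6)
    (n32 : NEdg s3 l3 r3 q2 lq2 rq2) (n35 : NEdg s3 l3 r3 q5 lq5 rq5)
    (n36 : NEdg s3 l3 r3 q6 lq6 rq6)
    (n42 : NEdg s4 l4 r4 q2 lq2 rq2)
    (n44 : NEdg s4 l4 r4 q4 lq4 rq4) (n46 : NEdg s4 l4 r4 q6 lq6 rq6)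
    (n52 : NEdg s5 l5 r5 q2 lq2 rq2) (n53 : NEdg s5 l5 r5 q3 lq3 rq3)
    (n54 : NEdg s5 l5 r5 q4 lq4 rq4) (n55 : NEdg s5 l5 r5 q5 lq5 rq5)
    (n56 : NEdg s5 l5 r5 q6 lq6 rq6)
    (h54 : s5 + 1 ≤ q4) : False := by
  obtain ⟨⟨e11a, e11b⟩, e11c, e11d⟩ := e11
  obtain ⟨⟨e21a, e21b⟩, e21c, e21d⟩ := e21
  obtain ⟨⟨e31a, e31b⟩, e31c, e31d⟩ := e31
  obtain ⟨⟨e41a, e41b⟩, e41c, e41d⟩ := e41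
  obtain ⟨⟨e51a, e51b⟩, e51c, e51d⟩ := e51
  obtain ⟨⟨e24a, e24b⟩, e24c, e24d⟩ := e24
  obtain ⟨⟨e34a, e34b⟩, e34c, e34d⟩ := e34
  obtain ⟨⟨e15a, e15b⟩, e15c, e15d⟩ := e15
  obtain ⟨⟨e45a, e45b⟩, e45c, e45d⟩ := e45
  obtain ⟨⟨e16a, e16b⟩, e16c, e16d⟩ := e16
  obtain ⟨⟨e22a, e22b⟩, e22c, e22d⟩ := e22
  obtain ⟨⟨e33a, e33b⟩, e33c, e33d⟩ := e33
  obtain ⟨n12a, n12b, n12c⟩ := n12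
  obtain ⟨n13a, n13b, n13c⟩ := n13
  obtain ⟨n14a, n14b, n14c⟩ := n14
  obtain ⟨n23a, n23b, n23c⟩ := n23
  obtain ⟨n25a, n25b, n25c⟩ := n25
  obtain ⟨n26a, n26b, n26c⟩ := n26
  obtain ⟨n32a, n32b, n32c⟩ := n32
  obtain ⟨n35a, n35b, n35c⟩ := n35
  obtain ⟨n36a, n36b, n36c⟩ := n36
  obtain ⟨n42a, n42b, n42c⟩ := n42
  obtain ⟨n44a, n44b, n44c⟩ := n44
  obtain ⟨n46a, n46b, n46c⟩ := n46
  obtain ⟨_, n54b, _⟩ := n54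
  obtain ⟨n52a, n52b, n52c⟩ := n52
  obtain ⟨n53a, n53b, n53c⟩ := n53
  obtain ⟨n55a, n55b, n55c⟩ := n55
  obtain ⟨n56a, n56b, n56c⟩ := n56
  rcases n55a with hA | hC
  · -- Case A : q5 ≥ s5 + 1
    rcases n25a with h25 | h25
    · rcases n35a with h35 | h35
      · -- A-c : q5 ≥ s2 + 1 and q5 ≥ s3 + 1
        rcases n14a with h14 | h14
        · rcases n44a with h44 | h44
          · -- A-c-iii : q4 ≥ s1 + 1 and q4 ≥ s4 + 1
            have hq5 : q5 = s1 + 1 := le_antisymm e15b (by linarith)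
            have hq4 : q4 = s2 + 1 := le_antisymm e24b (by linarith)
            obtain ⟨hr1, hlq5⟩ := e15c hq5
            have hnr2 : ¬ r2 := fun hh => n25b (by linarith) ⟨hh, hlq5⟩
            exact hnr2 (e24c hq4).1
          · -- A-c-ii : s4 ≥ q4 + 1
            have hq4 : q4 = p := le_antisymm (by linarith) (by linarith)
            have hs5 : s5 = p - 1 := by linarith
            have hs4 : s4 = p + 1 := by linarith
            obtain ⟨hr5, hlp⟩ := e51c (by linarith)
            obtain ⟨hrp, hl4⟩ := e41d (by linarith)
            have hnrq4 : ¬ rq4 := fun hh => n44c (by linarith) ⟨hh, hl4⟩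
            have hnlq4 : ¬ lq4 := fun hh => n54b (by linarith) ⟨hr5, hh⟩
            have hs2l : p - 1 < s2 := by
              rcases lt_or_eq_of_le (show p - 1 ≤ s2 by linarith) with hh | hh
              · exact hh
              · exact absurd (e24c (by linarith)).2 hnlq4
            have hs2r : s2 < p + 1 := by
              rcases lt_or_eq_of_le (show s2 ≤ p + 1 by linarith) with hh | hh
              · exact hh
              · exact absurd (e24d (by linarith)).1 hnrq4
            have hs3l : p - 1 < s3 := by
              rcases lt_or_eq_of_le (show p - 1 ≤ s3 by linarith) with hh | hh
              · exact hh
              · exact absurd (e34c (by linarith)).2 hnlq4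
            have hs3r : s3 < p + 1 := by
              rcases lt_or_eq_of_le (show s3 ≤ p + 1 by linarith) with hh | hh
              · exact hh
              · exact absurd (e34d (by linarith)).1 hnrq4
            have hq2ge : p ≤ q2 := by
              rcases n52a with hh | hh
              · linarith
              · linarith
            have hq2le : q2 ≤ p := by
              rcases n42a with hh | hh
              · linarith
              · linarith
            rcases n32a with hh | hh
            · linarith
            · linarith
          -- end A-c-ii
        · -- A-c-i : s1 ≥ q4 + 1
          have hq4 : q4 = p := le_antisymm (by linarith) (by linarith)
          have hs5 : s5 = p - 1 := by linarith
          have hs1 : s1 = p + 1 := by linarith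
          obtain ⟨hr5, hlp⟩ := e51c (by linarith)
          obtain ⟨hrp, hl1⟩ := e11d (by linarith)
          have hnrq4 : ¬ rq4 := fun hh => n14c (by linarith) ⟨hh, hl1⟩
          have hnlq4 : ¬ lq4 := fun hh => n54b (by linarith) ⟨hr5, hh⟩
          have hs2l : p - 1 < s2 := by
            rcases lt_or_eq_of_le (show p - 1 ≤ s2 by linarith) with hh | hh
            · exact hh
            · exact absurd (e24c (by linarith)).2 hnlq4
          have hs2r : s2 < p + 1 := by
            rcases lt_or_eq_of_le (show s2 ≤ p + 1 by linarith) with hh | hh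
            · exact hh
            · exact absurd (e24d (by linarith)).1 hnrq4
          have hs3l : p - 1 < s3 := by
            rcases lt_or_eq_of_le (show p - 1 ≤ s3 by linarith) with hh | hh
            · exact hh
            · exact absurd (e34c (by linarith)).2 hnlq4
          have hs3r : s3 < p + 1 := by
            rcases lt_or_eq_of_le (show s3 ≤ p + 1 by linarith) with hh | hh
            · exact hh
            · exact absurd (e34d (by linarith)).1 hnrq4
          have hq2ge : p ≤ q2 := by
            rcases n52a with hh | hh
            · linarith
            · linarith
          have hq2le : q2 ≤ p := by
            rcases n12a with hh | hh
            · linarith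
            · linarith
          rcases n32a with hh | hh
          · linarith
          · linarith
        -- end A-c-i
      · -- A-b : s3 ≥ q5 + 1
        have hq5 : q5 = p := le_antisymm (by linarith) (by linarith)
        have hs5 : s5 = p - 1 := by linarith
        have hs3 : s3 = p + 1 := by linarith
        obtain ⟨hr5, hlp⟩ := e51c (by linarith)
        obtain ⟨hrp, hl3⟩ := e31d (by linarith)
        have hnrq5 : ¬ rq5 := fun hh => n35c (by linarith) ⟨hh, hl3⟩
        have hnlq5 : ¬ lq5 := fun hh => n55b (by linarith) ⟨hr5, hh⟩
        have hs1l : p - 1 < s1 := by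
          rcases lt_or_eq_of_le (show p - 1 ≤ s1 by linarith) with hh | hh
          · exact hh
          · exact absurd (e15c (by linarith)).2 hnlq5
        have hs1r : s1 < p + 1 := by
          rcases lt_or_eq_of_le (show s1 ≤ p + 1 by linarith) with hh | hh
          · exact hh
          · exact absurd (e15d (by linarith)).1 hnrq5
        have hs4l : p - 1 < s4 := by
          rcases lt_or_eq_of_le (show p - 1 ≤ s4 by linarith) with hh | hh
          · exact hh
          · exact absurd (e45c (by linarith)).2 hnlq5
        have hs4r : s4 < p + 1 := by
          rcases lt_or_eq_of_le (show s4 ≤ p + 1 by linarith) with hh | hh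
          · exact hh
          · exact absurd (e45d (by linarith)).1 hnrq5
        have hq6ge : p ≤ q6 := by
          rcases n56a with hh | hh
          · linarith
          · linarith
        have hq6le : q6 ≤ p := by
          rcases n36a with hh | hh
          · linarith
          · linarith
        rcases n46a with hh | hh
        · linarith
        · linarith
      -- end A-b
    · -- A-a : s2 ≥ q5 + 1
      have hq5 : q5 = p := le_antisymm (by linarith) (by linarith)
      have hs5 : s5 = p - 1 := by linarith
      have hs2 : s2 = p + 1 := by linarith
      obtain ⟨hr5, hlp⟩ := e51c (by linarith)
      obtain ⟨hrp, hl2⟩ := e21d (by linarith)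
      have hnrq5 : ¬ rq5 := fun hh => n25c (by linarith) ⟨hh, hl2⟩
      have hnlq5 : ¬ lq5 := fun hh => n55b (by linarith) ⟨hr5, hh⟩
      have hs1l : p - 1 < s1 := by
        rcases lt_or_eq_of_le (show p - 1 ≤ s1 by linarith) with hh | hh
        · exact hh
        · exact absurd (e15c (by linarith)).2 hnlq5
      have hs1r : s1 < p + 1 := by
        rcases lt_or_eq_of_le (show s1 ≤ p + 1 by linarith) with hh | hh
        · exact hh
        · exact absurd (e15d (by linarith)).1 hnrq5
      have hs4l : p - 1 < s4 := by
        rcases lt_or_eq_of_le (show p - 1 ≤ s4 by linarith) with hh | hh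
        · exact hh
        · exact absurd (e45c (by linarith)).2 hnlq5
      have hs4r : s4 < p + 1 := by
        rcases lt_or_eq_of_le (show s4 ≤ p + 1 by linarith) with hh | hh
        · exact hh
        · exact absurd (e45d (by linarith)).1 hnrq5
      have hq6ge : p ≤ q6 := by
        rcases n56a with hh | hh
        · linarith
        · linarith
      have hq6le : q6 ≤ p := by
        rcases n26a with hh | hh
        · linarith
        · linarith
      rcases n46a with hh | hh
      · linarith
      · linarith
    -- end A-a
  · -- Case C : s5 ≥ q5 + 1
    have hlow : p - 1 < s5 := by
      by_contra hcon
      push_neg at hcon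
      have hs5 : s5 = p - 1 := le_antisymm hcon (by linarith)
      have hs1 : s1 = p - 1 := le_antisymm (by linarith) (by linarith)
      have hs4 : s4 = p - 1 := le_antisymm (by linarith) (by linarith)
      obtain ⟨hr1, hlp⟩ := e11c (by linarith)
      obtain ⟨hrq5, hl1⟩ := e15d (by linarith)
      obtain ⟨hr4, _⟩ := e41c (by linarith)
      obtain ⟨_, hl4⟩ := e45d (by linarith)
      rcases n46a with hh | hh
      · -- q6 = p
        have hq6 : q6 = p := le_antisymm (by linarith) (by linarith)
        obtain ⟨_, hlq6⟩ := e16c (by linarith)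
        exact n46b (by linarith) ⟨hr4, hlq6⟩
      · -- q6 = p - 2
        have hq6 : q6 = p - 2 := le_antisymm (by linarith) (by linarith)
        obtain ⟨hrq6, _⟩ := e16d (by linarith)
        exact n46c (by linarith) ⟨hrq6, hl4⟩
    have hhigh : s5 < p + 1 := by
      by_contra hcon
      push_neg at hcon
      have hs5 : s5 = p + 1 := le_antisymm (by linarith) hcon
      have hs2 : s2 = p + 1 := le_antisymm (by linarith) (by linarith)
      have hs3 : s3 = p + 1 := le_antisymm (by linarith) (by linarith)
      obtain ⟨hrp, hl2⟩ := e21d (by linarith)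
      obtain ⟨hr2, hlq4⟩ := e24c (by linarith)
      obtain ⟨_, hl3⟩ := e31d (by linarith)
      obtain ⟨hr3, _⟩ := e34c (by linarith)
      rcases n32a with hh | hh
      · -- q2 = p + 2
        have hq2 : q2 = s2 + 1 := le_antisymm e22b (by linarith)
        obtain ⟨_, hlq2⟩ := e22c hq2
        exact n32b (by linarith) ⟨hr3, hlq2⟩
      · -- q2 = p
        have hq2 : s2 = q2 + 1 := le_antisymm (by linarith) (by linarith)
        obtain ⟨hrq2, _⟩ := e22d hq2
        exact n32c (by linarith) ⟨hrq2, hl3⟩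
    rcases n52a with h52 | h52
    · rcases n53a with h53 | h53
      · -- final : q2 ≥ s5 + 1, q3 ≥ s5 + 1
        have h32 : q2 ≥ s3 + 1 := by
          rcases n32a with hh | hh
          · exact hh
          · linarith
        have h23 : q3 ≥ s2 + 1 := by
          rcases n23a with hh | hh
          · exact hh
          · linarith
        have hs23 : s2 = s3 := le_antisymm (by linarith) (by linarith)
        have hq2 : q2 = s2 + 1 := le_antisymm e22b (by linarith)
        have hq3 : q3 = s3 + 1 := le_antisymm e33b (by linarith)
        obtain ⟨hr2, hlq2⟩ := e22c hq2
        have hnr3 : ¬ r3 := fun hh => n32b (by linarith) ⟨hh, hlq2⟩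
        exact hnr3 (e33c hq3).1
      · -- L3 : s5 ≥ q3 + 1
        have hs3 : s3 = q3 + 1 := le_antisymm (by linarith) (by linarith)
        obtain ⟨hrq3, hl3⟩ := e33d hs3
        rcases n13a with hh | hh
        · linarith
        · -- s1 ≥ q3 + 1, and s1 ≤ q5 + 1 ≤ s5 = q3 + 1
          have hs1 : s1 = q5 + 1 := le_antisymm (by linarith) (by linarith)
          obtain ⟨hrq5, hl1⟩ := e15d hs1
          exact n13c (by linarith) ⟨hrq3, hl1⟩
    · -- L2 : s5 ≥ q2 + 1
      have hs2 : s2 = q2 + 1 := le_antisymm (by linarith) (by linarith)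
      obtain ⟨hrq2, hl2⟩ := e22d hs2
      rcases n12a with hh | hh
      · linarith
      · have hs1 : s1 = q5 + 1 := le_antisymm (by linarith) (by linarith)
        obtain ⟨hrq5, hl1⟩ := e15d hs1
        exact n12c (by linarith) ⟨hrq2, hl1⟩

/-- `M` is not a mixed unit interval bigraph. -/
theorem M_not_U_bigraph : ¬ IsMBigraph UnitFam ME := by
  rintro ⟨f, hmem, hrep⟩
  obtain ⟨p, hpI, hpC⟩ := unit_bounds (hmem (Sum.inr 0))
  obtain ⟨q2, h2I, h2C⟩ := unit_bounds (hmem (Sum.inr 1))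
  obtain ⟨q3, h3I, h3C⟩ := unit_bounds (hmem (Sum.inr 2))
  obtain ⟨q4, h4I, h4C⟩ := unit_bounds (hmem (Sum.inr 3))
  obtain ⟨q5, h5I, h5C⟩ := unit_bounds (hmem (Sum.inr 4))
  obtain ⟨q6, h6I, h6C⟩ := unit_bounds (hmem (Sum.inr 5))
  obtain ⟨s1, g1I, g1C⟩ := unit_bounds (hmem (Sum.inl 0))
  obtain ⟨s2, g2I, g2C⟩ := unit_bounds (hmem (Sum.inl 1))
  obtain ⟨s3, g3I, g3C⟩ := unit_bounds (hmem (Sum.inl 2))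
  obtain ⟨s4, g4I, g4C⟩ := unit_bounds (hmem (Sum.inl 3))
  obtain ⟨s5, g5I, g5C⟩ := unit_bounds (hmem (Sum.inl 4))
  have e11 := to_Edg g1C hpC ((hrep 0 0).1 (by unfold ME; decide))
  have e21 := to_Edg g2C hpC ((hrep 1 0).1 (by unfold ME; decide))
  have e31 := to_Edg g3C hpC ((hrep 2 0).1 (by unfold ME; decide))
  have e41 := to_Edg g4C hpC ((hrep 3 0).1 (by unfold ME; decide))
  have e51 := to_Edg g5C hpC ((hrep 4 0).1 (by unfold ME; decide))
  have e24 := to_Edg g2C h4C ((hrep 1 3).1 (by unfold ME; decide))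
  have e34 := to_Edg g3C h4C ((hrep 2 3).1 (by unfold ME; decide))
  have e15 := to_Edg g1C h5C ((hrep 0 4).1 (by unfold ME; decide))
  have e45 := to_Edg g4C h5C ((hrep 3 4).1 (by unfold ME; decide))
  have e16 := to_Edg g1C h6C ((hrep 0 5).1 (by unfold ME; decide))
  have e22 := to_Edg g2C h2C ((hrep 1 1).1 (by unfold ME; decide))
  have e33 := to_Edg g3C h3C ((hrep 2 2).1 (by unfold ME; decide))
  have n12 := to_NEdg g1I h2I (fun h => (by unfold ME; decide : ¬ ME 0 1) ((hrep 0 1).2 h))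
  have n13 := to_NEdg g1I h3I (fun h => (by unfold ME; decide : ¬ ME 0 2) ((hrep 0 2).2 h))
  have n14 := to_NEdg g1I h4I (fun h => (by unfold ME; decide : ¬ ME 0 3) ((hrep 0 3).2 h))
  have n23 := to_NEdg g2I h3I (fun h => (by unfold ME; decide : ¬ ME 1 2) ((hrep 1 2).2 h))
  have n25 := to_NEdg g2I h5I (fun h => (by unfold ME; decide : ¬ ME 1 4) ((hrep 1 4).2 h))
  have n26 := to_NEdg g2I h6I (fun h => (by unfold ME; decide : ¬ ME 1 5) ((hrep 1 5).2 h))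
  have n32 := to_NEdg g3I h2I (fun h => (by unfold ME; decide : ¬ ME 2 1) ((hrep 2 1).2 h))
  have n35 := to_NEdg g3I h5I (fun h => (by unfold ME; decide : ¬ ME 2 4) ((hrep 2 4).2 h))
  have n36 := to_NEdg g3I h6I (fun h => (by unfold ME; decide : ¬ ME 2 5) ((hrep 2 5).2 h))
  have n42 := to_NEdg g4I h2I (fun h => (by unfold ME; decide : ¬ ME 3 1) ((hrep 3 1).2 h))
  have n44 := to_NEdg g4I h4I (fun h => (by unfold ME; decide : ¬ ME 3 3) ((hrep 3 3).2 h))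
  have n46 := to_NEdg g4I h6I (fun h => (by unfold ME; decide : ¬ ME 3 5) ((hrep 3 5).2 h))
  have n52 := to_NEdg g5I h2I (fun h => (by unfold ME; decide : ¬ ME 4 1) ((hrep 4 1).2 h))
  have n53 := to_NEdg g5I h3I (fun h => (by unfold ME; decide : ¬ ME 4 2) ((hrep 4 2).2 h))
  have n54 := to_NEdg g5I h4I (fun h => (by unfold ME; decide : ¬ ME 4 3) ((hrep 4 3).2 h))
  have n55 := to_NEdg g5I h5I (fun h => (by unfold ME; decide : ¬ ME 4 4) ((hrep 4 4).2 h))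
  have n56 := to_NEdg g5I h6I (fun h => (by unfold ME; decide : ¬ ME 4 5) ((hrep 4 5).2 h))
  rcases n54.1 with h | h
  · exact core_s10 e11 e21 e31 e41 e51 e24 e34 e15 e45 e16 e22 e33
      n12 n13 n14 n23 n25 n26 n32 n35 n36 n42 n44 n46 n52 n53 n54 n55 n56 h
  · exact core_s10 (Edg_neg e11) (Edg_neg e21) (Edg_neg e31) (Edg_neg e41) (Edg_neg e51)
      (Edg_neg e24) (Edg_neg e34) (Edg_neg e15) (Edg_neg e45) (Edg_neg e16)
      (Edg_neg e22) (Edg_neg e33)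
      (NEdg_neg n12) (NEdg_neg n13) (NEdg_neg n14) (NEdg_neg n23) (NEdg_neg n25)
      (NEdg_neg n26) (NEdg_neg n32) (NEdg_neg n35) (NEdg_neg n36) (NEdg_neg n42)
      (NEdg_neg n44) (NEdg_neg n46) (NEdg_neg n52) (NEdg_neg n53) (NEdg_neg n54)
      (NEdg_neg n55) (NEdg_neg n56) (by linarith)
end
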